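/- arXiv:2004.08259 — 9 statements merged into one kernel-verified Lean document; each statement's English description precedes it below -/
import Mathlib

section
/- Let X ⊆ ℝ^d be a convex set, fix x_k ∈ X, and let m̃ : ℝ^d → ℝ be a differentiable, strictly convex function with m̃(x_k) = f(x_k) and ∇m̃(x_k) = ∇f(x_k). Assume that for every x ∈ X, if L(x_k, x) ⊆ S(x_k) and m̃(x) ≤ m̃(x_k), then f(x) ≤ m̃(x). Then every x ∈ X with m̃(x) ≤ m̃(x_k) satisfies both L(x_k, x) ⊆ S(x_k) and f(x) ≤ m̃(x). -/
/-! Restrict everything to the line `t ↦ xk + t • (x - xk)`. Strict convexity of `m̃` and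
`m̃ x ≤ m̃ xk` make `m̃ < m̃ xk` on the open segment and give `m̃` a negative directional
derivative at `xk`; since `∇f xk = ∇m̃ xk`, `f` too drops below `f xk` right after `xk`.
At any `t ∈ (0, 1)` up to which the segment lies in `S xk`, the hypothesis gives
`f ≤ m̃ < m̃ xk = f xk` at `t`, so by continuity the segment stays in `S xk` a little further.
Continuous induction on `[0, 1]` concludes. -/

open scoped RealInnerProductSpace

/-- The gradient of f(x) = (1/2)‖F(x)‖², namely ∇f(x) = J(x)ᵀ F(x). -/
noncomputable def gradf {d n : ℕ}
    (F : EuclideanSpace ℝ (Fin d) → EuclideanSpace ℝ (Fin n))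
    (x : EuclideanSpace ℝ (Fin d)) : EuclideanSpace ℝ (Fin d) :=
  ContinuousLinearMap.adjoint (fderiv ℝ F x) (F x)

open Set Topology AffineMap

theorem hasGradientAt_half_norm_sq {d n : ℕ}
    {F : EuclideanSpace ℝ (Fin d) → EuclideanSpace ℝ (Fin n)} {x : EuclideanSpace ℝ (Fin d)}
    (hF : DifferentiableAt ℝ F x) :
    HasGradientAt (fun y => (1 / 2 : ℝ) * ‖F y‖ ^ 2) (gradf F x) x := by
  rw [hasGradientAt_iff_hasFDerivAt]
  refine (hF.hasFDerivAt.norm_sq.const_mul (1 / 2 : ℝ)).congr_fderiv ?_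
  ext v
  simp [gradf, ContinuousLinearMap.adjoint_inner_left]

theorem eventually_nhdsGT_lt_of_hasDerivAt_neg {φ : ℝ → ℝ} {D t : ℝ}
    (hφ : HasDerivAt φ D t) (hD : D < 0) : ∀ᶠ s in 𝓝[>] t, φ s < φ t := by
  have hslope := (hasDerivWithinAt_iff_tendsto_slope' (lt_irrefl t)).1 hφ.hasDerivWithinAt
  filter_upwards [hslope.eventually_lt_const hD, self_mem_nhdsWithin] with s hs hts
  rw [slope_def_field] at hs
  exact sub_neg.1 ((div_neg_iff.1 hs).resolve_left fun h => (sub_pos.2 hts).not_gt h.2).1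

section

variable {E : Type*} [NormedAddCommGroup E] [NormedSpace ℝ E]

theorem HasFDerivAt.hasDerivAt_comp_lineMap {f : E → ℝ} {f' : E →L[ℝ] ℝ} {a : E} (x : E)
    (hf : HasFDerivAt f f' a) : HasDerivAt (fun t : ℝ => f (lineMap a x t)) (f' (x - a)) 0 :=
  hf.comp_hasDerivAt_of_eq (0 : ℝ) hasDerivAt_lineMap (lineMap_apply_zero a x).symm

variable {s : Set E} {m : E → ℝ} {a x : E}

theorem StrictConvexOn.apply_lineMap_lt (hm : StrictConvexOn ℝ s m) (ha : a ∈ s) (hx : x ∈ s)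
    (hxa : x ≠ a) (hmx : m x ≤ m a) {t : ℝ} (ht : t ∈ Ioo 0 1) : m (lineMap a x t) < m a :=
  max_eq_left hmx ▸ hm.lt_on_openSegment ha hx hxa.symm (lineMap_mem_openSegment ℝ a x ht)

theorem StrictConvexOn.apply_sub_neg_of_hasFDerivAt_of_le {m' : E →L[ℝ] ℝ}
    (hm : StrictConvexOn ℝ s m) (ha : a ∈ s) (hx : x ∈ s) (hxa : x ≠ a)
    (hmx : m x ≤ m a) (hm' : HasFDerivAt m m' a) : m' (x - a) < 0 := by
  have hline : ConvexOn ℝ (lineMap a x ⁻¹' s) (m ∘ lineMap a x) :=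
    hm.convexOn.comp_affineMap (lineMap a x)
  have hhalf : m (lineMap a x (1 / 2 : ℝ)) < m a :=
    hm.apply_lineMap_lt ha hx hxa hmx (by norm_num)
  calc m' (x - a)
      ≤ slope (m ∘ lineMap a x) 0 (1 / 2) :=
        hline.le_slope_of_hasDerivAt (by simpa using ha)
          (hm.convexOn.1.lineMap_mem ha hx (by norm_num)) (by norm_num)
          (hm'.hasDerivAt_comp_lineMap x)
    _ < 0 := by
        rw [slope_def_field]
        simp only [Function.comp_apply, lineMap_apply_zero]
        apply div_neg_of_neg_of_pos <;> linarith

theorem segment_subset_sublevel_of_majorant {f : E → ℝ} {f' : E →L[ℝ] ℝ}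
    (hf : Continuous f) (hf' : HasFDerivAt f f' a) (hm : StrictConvexOn ℝ s m)
    (hm' : HasFDerivAt m f' a) (ha : a ∈ s) (hx : x ∈ s) (hma : m a = f a) (hmx : m x ≤ m a)
    (hmaj : ∀ y ∈ openSegment ℝ a x, segment ℝ a y ⊆ {z | f z ≤ f a} → m y ≤ m a →
      f y ≤ m y) :
    segment ℝ a x ⊆ {z | f z ≤ f a} := by
  rcases eq_or_ne x a with rfl | hxa
  · simp
  rw [segment_eq_image_lineMap ℝ, image_subset_iff]
  refine IsClosed.Icc_subset_of_forall_mem_nhdsGT_of_Icc_subset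
    ((isClosed_le (hf.comp lineMap_continuous) continuous_const).inter isClosed_Icc)
    (by simp) fun t ht hsub => ?_
  rcases ht.1.eq_or_lt with rfl | ht0
  · have hdescent : f' (x - a) < 0 :=
      hm.apply_sub_neg_of_hasFDerivAt_of_le ha hx hxa hmx hm'
    filter_upwards [eventually_nhdsGT_lt_of_hasDerivAt_neg
      (hf'.hasDerivAt_comp_lineMap x) hdescent] with u hu
    simpa using hu.le
  · have hmy : m (lineMap a x t) < m a := hm.apply_lineMap_lt ha hx hxa hmx ⟨ht0, ht.2⟩
    have hsegy : segment ℝ a (lineMap a x t) ⊆ {z | f z ≤ f a} := by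
      have h := image_segment ℝ (lineMap a x) 0 t
      rw [segment_eq_Icc ht0.le, lineMap_apply_zero] at h
      exact h ▸ image_subset_iff.2 hsub
    have hfy : f (lineMap a x t) < f a :=
      (hmaj _ (lineMap_mem_openSegment ℝ a x ⟨ht0, ht.2⟩) hsegy hmy.le).trans_lt (hma ▸ hmy)
    exact nhdsWithin_le_nhds <| ((hf.comp lineMap_continuous).continuousAt.eventually_lt
      continuousAt_const hfy).mono fun _ => le_of_lt

end

/-- Technical lemma for majorization-minimization under a
Lipschitz-type assumption only on a sublevel set. -/
theorem stmt_5 {d n : ℕ}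
    (F : EuclideanSpace ℝ (Fin d) → EuclideanSpace ℝ (Fin n))
    (hF : ContDiff ℝ 1 F)
    (f : EuclideanSpace ℝ (Fin d) → ℝ)
    (hf : ∀ x, f x = (1 / 2) * ‖F x‖ ^ 2)
    (X : Set (EuclideanSpace ℝ (Fin d))) (hXconvex : Convex ℝ X)
    (xk : EuclideanSpace ℝ (Fin d)) (hxk : xk ∈ X)
    (mt : EuclideanSpace ℝ (Fin d) → ℝ)
    (hmtdiff : Differentiable ℝ mt)
    (hmtconv : StrictConvexOn ℝ Set.univ mt)
    (hmteq : mt xk = f xk)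
    (hmtgrad : gradient mt xk = gradf F xk)
    (hImp : ∀ x ∈ X, segment ℝ xk x ⊆ {z | f z ≤ f xk} → mt x ≤ mt xk →
      f x ≤ mt x) :
    ∀ x ∈ X, mt x ≤ mt xk →
      segment ℝ xk x ⊆ {z | f z ≤ f xk} ∧ f x ≤ mt x := by
  obtain rfl : f = fun x => (1 / 2) * ‖F x‖ ^ 2 := funext hf
  intro x hx hmx
  have hgrad_f : HasGradientAt _ (gradf F xk) xk :=
    hasGradientAt_half_norm_sq (hF.differentiable one_ne_zero xk)
  have hgrad_mt : HasGradientAt mt (gradf F xk) xk := hmtgrad ▸ (hmtdiff xk).hasGradientAt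
  have hseg := segment_subset_sublevel_of_majorant (by fun_prop) hgrad_f.hasFDerivAt hmtconv
    hgrad_mt.hasFDerivAt (mem_univ xk) (mem_univ x) hmteq hmx
    fun y hy => hImp y (hXconvex.openSegment_subset hxk hx hy)
  exact ⟨hseg, hImp x hx hseg hmx⟩
end

section
/- Fix x_k ∈ C and a constant L_f > 0 such that ‖∇f(y) − ∇f(x)‖ ≤ L_f‖y − x‖ for all x, y ∈ C with L(x, y) ⊆ S(x_k). Then for every η ≥ L_f, the projected gradient point satisfies L(x_k, P_η(x_k)) ⊆ S(x_k) and f(P_η(x_k)) − f(x_k) ≤ −D_η(x_k). -/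
open scoped RealInnerProductSpace

/-! Along `t ↦ x + t • (p - x)` the Lipschitz bound on the gradient is available as long as the
path has not left the sublevel set, and there it gives the descent estimate
`f (x + t • (p - x)) ≤ f x + t ⟪∇f x, p - x⟫ + (L / 2) t² ‖p - x‖²`. Since
`⟪∇f x, p - x⟫ + (η / 2) ‖p - x‖² ≤ 0` (compare `p` with `y = x`) and `L ≤ η`, the right-hand
side is `< f x` for `0 < t < 1`, so by continuity the path stays in the sublevel set a little
longer; at `t = 0` the same role is played by `⟪∇f x, p - x⟫ < 0`. Continuous induction puts the
whole segment in the sublevel set, and the descent estimate at `t = 1` is the claimed decrease. -/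

open Set Filter

theorem hasGradientAt_gradf {d n : ℕ} {F : EuclideanSpace ℝ (Fin d) → EuclideanSpace ℝ (Fin n)}
    {x : EuclideanSpace ℝ (Fin d)} (hF : DifferentiableAt ℝ F x) :
    HasGradientAt (fun y => 1 / 2 * ‖F y‖ ^ 2) (gradf F x) x := by
  rw [hasGradientAt_iff_hasFDerivAt]
  refine (hF.hasFDerivAt.norm_sq.const_mul (1 / 2 : ℝ)).congr_fderiv ?_
  ext v
  simp [gradf, ContinuousLinearMap.adjoint_inner_left]

theorem le_add_add_half_of_hasDerivAt_le {φ φ' : ℝ → ℝ} {a b : ℝ}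
    (hφ : ∀ t, HasDerivAt φ (φ' t) t) (hle : ∀ t ∈ Ico (0 : ℝ) 1, φ' t ≤ a + b * t) :
    φ 1 ≤ φ 0 + a + b / 2 := by
  set B : ℝ → ℝ := fun t => φ 0 + a * t + b / 2 * t ^ 2
  have hB : ∀ t, HasDerivAt B (a + b * t) t := fun t => by
    refine ((((hasDerivAt_id t).const_mul a).const_add (φ 0)).add
      ((hasDerivAt_pow 2 t).const_mul (b / 2))).congr_deriv ?_
    simp only [mul_one, Nat.cast_ofNat, Nat.add_one_sub_one, pow_one]
    ring
  have := image_le_of_deriv_right_le_deriv_boundary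
    (fun t _ => (hφ t).continuousAt.continuousWithinAt) (fun t _ => (hφ t).hasDerivWithinAt)
    (by simp [B]) (fun t _ => (hB t).continuousAt.continuousWithinAt)
    (fun t _ => (hB t).hasDerivWithinAt) hle (right_mem_Icc.2 zero_le_one)
  simpa [B] using this

section Gradient

variable {E : Type*} [NormedAddCommGroup E] [InnerProductSpace ℝ E] [CompleteSpace E]
  {f : E → ℝ} {g : E → E}

theorem hasDerivAt_comp_lineMap (hg : ∀ z, HasGradientAt f (g z) z) (x y : E) (t : ℝ) :
    HasDerivAt (fun s => f (AffineMap.lineMap x y s)) ⟪g (AffineMap.lineMap x y t), y - x⟫ t := by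
  have := (hg _).hasFDerivAt.comp_hasDerivAt t (AffineMap.hasDerivAt_lineMap (a := x) (b := y))
  rwa [InnerProductSpace.toDual_apply_apply] at this

theorem le_add_inner_add_of_norm_gradient_sub_le (hg : ∀ z, HasGradientAt f (g z) z) {x y : E}
    {L : ℝ} (hL : ∀ z ∈ segment ℝ x y, ‖g z - g x‖ ≤ L * ‖z - x‖) :
    f y ≤ f x + ⟪g x, y - x⟫ + L / 2 * ‖y - x‖ ^ 2 := by
  set ℓ := AffineMap.lineMap (k := ℝ) x y
  have h := le_add_add_half_of_hasDerivAt_le (hasDerivAt_comp_lineMap hg x y)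
    (a := ⟪g x, y - x⟫) (b := L * ‖y - x‖ ^ 2) fun t ht => ?_
  · simpa [ℓ, mul_div_right_comm] using h
  have hz : ℓ t - x = t • (y - x) := AffineMap.lineMap_vsub_left x y t
  calc ⟪g (ℓ t), y - x⟫ = ⟪g x, y - x⟫ + ⟪g (ℓ t) - g x, y - x⟫ := by rw [inner_sub_left]; ring
    _ ≤ ⟪g x, y - x⟫ + ‖g (ℓ t) - g x‖ * ‖y - x‖ := by gcongr; exact real_inner_le_norm _ _
    _ ≤ ⟪g x, y - x⟫ + L * ‖ℓ t - x‖ * ‖y - x‖ := by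
        gcongr; exact hL _ (lineMap_mem_segment _ _ _ (Ico_subset_Icc_self ht))
    _ = ⟪g x, y - x⟫ + L * ‖y - x‖ ^ 2 * t := by
        rw [hz, norm_smul, Real.norm_of_nonneg ht.1]; ring

theorem lt_of_segment_lineMap_subset_sublevel (hg : ∀ z, HasGradientAt f (g z) z)
    {x p : E} {L η : ℝ} (hLη : L ≤ η) (hK : ⟪g x, p - x⟫ < 0)
    (hdec : ⟪g x, p - x⟫ + η / 2 * ‖p - x‖ ^ 2 ≤ 0)
    (hL : ∀ y ∈ segment ℝ x p, segment ℝ x y ⊆ {z | f z ≤ f x} →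
      ‖g y - g x‖ ≤ L * ‖y - x‖)
    {t : ℝ} (ht : t ∈ Ioo 0 1)
    (hS : segment ℝ x (AffineMap.lineMap x p t) ⊆ {z | f z ≤ f x}) :
    f (AffineMap.lineMap x p t) < f x := by
  set y := AffineMap.lineMap x p t
  have hy : segment ℝ x y ⊆ segment ℝ x p :=
    (convex_segment x p).segment_subset (left_mem_segment ℝ x p)
      (lineMap_mem_segment ℝ x p (Ioo_subset_Icc_self ht))
  have h := le_add_inner_add_of_norm_gradient_sub_le hg (L := L) fun z hz =>
    hL z (hy hz) (((convex_segment x y).segment_subset (left_mem_segment ℝ x y) hz).trans hS)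
  rw [show y - x = t • (p - x) from AffineMap.lineMap_vsub_left x p t, inner_smul_right,
    norm_smul, Real.norm_of_nonneg ht.1.le] at h
  have hslope : ⟪g x, p - x⟫ + η / 2 * t * ‖p - x‖ ^ 2 < 0 := by
    nlinarith [mul_pos (sub_pos.2 ht.2) (neg_pos.2 hK), mul_le_mul_of_nonneg_left hdec ht.1.le]
  nlinarith [mul_pos ht.1 (neg_pos.2 hslope),
    mul_le_mul_of_nonneg_right hLη (sq_nonneg (t * ‖p - x‖))]

theorem segment_subset_sublevel_of_inner_add_sq_nonpos (hg : ∀ z, HasGradientAt f (g z) z)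
    {x p : E} {L η : ℝ} (hη : 0 < η) (hLη : L ≤ η)
    (hdec : ⟪g x, p - x⟫ + η / 2 * ‖p - x‖ ^ 2 ≤ 0)
    (hL : ∀ y ∈ segment ℝ x p, segment ℝ x y ⊆ {z | f z ≤ f x} →
      ‖g y - g x‖ ≤ L * ‖y - x‖) :
    segment ℝ x p ⊆ {z | f z ≤ f x} := by
  rcases eq_or_ne p x with rfl | hpx
  · simp [segment_same]
  set ℓ := AffineMap.lineMap (k := ℝ) x p
  have hK : ⟪g x, p - x⟫ < 0 := by
    have : 0 < ‖p - x‖ := norm_pos_iff.2 (sub_ne_zero.2 hpx)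
    nlinarith [mul_pos hη (pow_pos this 2)]
  have hφ := hasDerivAt_comp_lineMap hg x p
  have hφc : Continuous fun t => f (ℓ t) :=
    continuous_iff_continuousAt.2 fun t => (hφ t).continuousAt
  rw [segment_eq_image_lineMap, image_subset_iff]
  refine (isClosed_le hφc continuous_const).inter isClosed_Icc
    |>.Icc_subset_of_forall_mem_nhdsGT_of_Icc_subset (by simp [ℓ]) fun t ht hIcc => ?_
  rcases ht.1.eq_or_lt with rfl | ht0
  · have hslope := (hφ 0).hasDerivWithinAt.limsup_slope_le' (s := Ioi 0) (lt_irrefl (0 : ℝ))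
      (by simpa [ℓ] using hK)
    filter_upwards [hslope, self_mem_nhdsWithin] with z hz hz0
    simpa [ℓ] using ((slope_neg_iff_of_le (le_of_lt hz0)).1 hz).le
  · have hS : segment ℝ x (ℓ t) ⊆ {z | f z ≤ f x} := by
      have himage := image_segment ℝ ℓ 0 t
      rw [segment_eq_Icc ht.1, AffineMap.lineMap_apply_zero] at himage
      rwa [← himage, image_subset_iff]
    have hlt := lt_of_segment_lineMap_subset_sublevel hg hLη hK hdec hL ⟨ht0, ht.2⟩ hS
    exact mem_nhdsWithin_of_mem_nhds <| mem_of_superset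
      ((isOpen_lt hφc continuous_const).mem_nhds hlt) (ofPred_subset_ofPred.2 fun _ => le_of_lt)

end Gradient

/-- Here `p` is P_η(x_k), characterised by `hpmin`, and the right-hand side is −D_η(x_k). -/
theorem stmt_6_general {d n : ℕ}
    (F : EuclideanSpace ℝ (Fin d) → EuclideanSpace ℝ (Fin n))
    (hF : ContDiff ℝ 1 F)
    (f : EuclideanSpace ℝ (Fin d) → ℝ)
    (hf : ∀ x, f x = (1 / 2) * ‖F x‖ ^ 2)
    (C : Set (EuclideanSpace ℝ (Fin d)))
    (hCconvex : Convex ℝ C)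
    (xk : EuclideanSpace ℝ (Fin d)) (hxk : xk ∈ C)
    (Lf : ℝ) (hLf : 0 < Lf)
    (hgradLip : ∀ x ∈ C, ∀ y ∈ C, segment ℝ x y ⊆ {z | f z ≤ f xk} →
      ‖gradf F y - gradf F x‖ ≤ Lf * ‖y - x‖)
    (η : ℝ) (hη : Lf ≤ η)
    (p : EuclideanSpace ℝ (Fin d)) (hp : p ∈ C)
    (hpmin : ∀ y ∈ C,
      ⟪gradf F xk, p - xk⟫ + (η / 2) * ‖p - xk‖ ^ 2 ≤
      ⟪gradf F xk, y - xk⟫ + (η / 2) * ‖y - xk‖ ^ 2) :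
    segment ℝ xk p ⊆ {z | f z ≤ f xk} ∧
    f p - f xk ≤ -(-(⟪gradf F xk, p - xk⟫ + (η / 2) * ‖p - xk‖ ^ 2)) := by
  have hg : ∀ z, HasGradientAt f (gradf F z) z := fun z => by
    rw [funext hf]
    exact hasGradientAt_gradf (hF.differentiable one_ne_zero z)
  have hdec : ⟪gradf F xk, p - xk⟫ + η / 2 * ‖p - xk‖ ^ 2 ≤ 0 := by
    simpa using hpmin xk hxk
  have hL : ∀ y ∈ segment ℝ xk p, segment ℝ xk y ⊆ {z | f z ≤ f xk} →
      ‖gradf F y - gradf F xk‖ ≤ Lf * ‖y - xk‖ :=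
    fun y hy => hgradLip xk hxk y (hCconvex.segment_subset hxk hp hy)
  have hsub := segment_subset_sublevel_of_inner_add_sq_nonpos hg (hLf.trans_le hη) hη hdec hL
  have hdesc := le_add_inner_add_of_norm_gradient_sub_le hg fun y hy =>
    hL y hy (((convex_segment xk p).segment_subset (left_mem_segment ℝ xk p) hy).trans hsub)
  refine ⟨hsub, ?_⟩
  nlinarith [mul_le_mul_of_nonneg_right hη (sq_nonneg ‖p - xk‖)]

/-- The projected gradient step stays in the sublevel set and
decreases f by at least D_η(x_k).  Here `p` is the projected gradient point
P_η(x_k), i.e. the minimizer over C of y ↦ ⟪∇f(x_k), y − x_k⟫ + (η/2)‖y − x_k‖²,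
and D_η(x_k) = −(⟪∇f(x_k), p − x_k⟫ + (η/2)‖p − x_k‖²). -/
theorem stmt_6 {d n : ℕ}
    (F : EuclideanSpace ℝ (Fin d) → EuclideanSpace ℝ (Fin n))
    (hF : ContDiff ℝ 1 F)
    (f : EuclideanSpace ℝ (Fin d) → ℝ)
    (hf : ∀ x, f x = (1 / 2) * ‖F x‖ ^ 2)
    (C : Set (EuclideanSpace ℝ (Fin d)))
    (hCne : C.Nonempty) (hCclosed : IsClosed C) (hCconvex : Convex ℝ C)
    (xk : EuclideanSpace ℝ (Fin d)) (hxk : xk ∈ C)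
    (Lf : ℝ) (hLf : 0 < Lf)
    (hgradLip : ∀ x ∈ C, ∀ y ∈ C, segment ℝ x y ⊆ {z | f z ≤ f xk} →
      ‖gradf F y - gradf F x‖ ≤ Lf * ‖y - x‖)
    (η : ℝ) (hη : Lf ≤ η)
    (p : EuclideanSpace ℝ (Fin d)) (hp : p ∈ C)
    (hpmin : ∀ y ∈ C,
      ⟪gradf F xk, p - xk⟫ + (η / 2) * ‖p - xk‖ ^ 2 ≤
      ⟪gradf F xk, y - xk⟫ + (η / 2) * ‖y - xk‖ ^ 2) :
    segment ℝ xk p ⊆ {z | f z ≤ f xk} ∧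
    f p - f xk ≤ -(-(⟪gradf F xk, p - xk⟫ + (η / 2) * ‖p - xk‖ ^ 2)) :=
  stmt_6_general F hF f hf C hCconvex xk hxk Lf hLf hgradLip η hη p hp hpmin
end

section
/- Fix x₀ ∈ C and constants σ, L > 0 such that ‖J(x)‖ ≤ σ for all x ∈ C ∩ S(x₀) and ‖J(y) − J(x)‖ ≤ L‖y − x‖ for all x, y ∈ C with L(x, y) ⊆ S(x₀), and let L_f := σ² + L‖F(x₀)‖. Then for every η ≥ L_f and every x ∈ C ∩ S(x₀), one has ‖∇f(P_η(x)) − ∇f(x)‖ ≤ L_f‖P_η(x) − x‖. -/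
/-!
For `[a, b] ⊆ C ∩ S(x₀)` the splitting `∇f b − ∇f a = J(b)ᵀ (F b − F a) + (J b − J a)ᵀ F a`
gives `‖∇f b − ∇f a‖ ≤ L_f ‖b − a‖`, so it suffices to show that `[x, P_η(x)]` stays in `S(x₀)`.
Testing the minimality of `p = P_η(x)` against `x` gives `⟪∇f x, v⟫ ≤ −(η/2)‖v‖²` for
`v = p − x`. As long as `[x, x + t v] ⊆ S(x₀)`, the descent lemma yields
`f (x + t v) ≤ f x − (t/2)(η − L_f t)‖v‖² < f x` for `0 < t < 1`, and at `t = 0` the slope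
`⟪∇f x, v⟫` is negative; continuous induction on `t ∈ [0, 1]` then covers the whole segment.
-/

open scoped RealInnerProductSpace

open Set Filter Topology

lemma image_le_of_deriv_le_linear {g g' : ℝ → ℝ} {c θ : ℝ} (hg : ∀ t, HasDerivAt g (g' t) t)
    (hθ : 0 ≤ θ) (hg' : ∀ t ∈ Ico 0 θ, g' t ≤ g' 0 + c * t) :
    g θ ≤ g 0 + θ * g' 0 + c * θ ^ 2 / 2 := by
  have hB : ∀ t, HasDerivAt (fun t => g 0 + t * g' 0 + c * t ^ 2 / 2) (g' 0 + c * t) t := by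
    intro t
    refine ((((hasDerivAt_id t).mul_const (g' 0)).const_add (g 0)).add
      (((hasDerivAt_pow 2 t).const_mul c).div_const 2)).congr_deriv ?_
    norm_num
    ring
  exact image_le_of_deriv_right_le_deriv_boundary
    (fun t _ => (hg t).continuousAt.continuousWithinAt) (fun t _ => (hg t).hasDerivWithinAt)
    (by simp) (fun t _ => (hB t).continuousAt.continuousWithinAt)
    (fun t _ => (hB t).hasDerivWithinAt) hg' ⟨hθ, le_rfl⟩

lemma HasDerivAt.eventually_nhdsGT_lt {g : ℝ → ℝ} {g' t : ℝ} (hg : HasDerivAt g g' t)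
    (hg' : g' < 0) : ∀ᶠ z in 𝓝[>] t, g z < g t := by
  filter_upwards [hg.hasDerivWithinAt.limsup_slope_le' (lt_irrefl t) hg', self_mem_nhdsWithin]
    with z hz (hzt : t < z)
  rw [slope_def_field, div_lt_iff₀ (sub_pos.2 hzt)] at hz
  linarith

lemma segment_lineMap_eq_image {E : Type*} [AddCommGroup E] [Module ℝ E] {x p : E} {t : ℝ}
    (ht : 0 ≤ t) :
    segment ℝ x (AffineMap.lineMap x p t) = AffineMap.lineMap x p '' Icc 0 t := by
  rw [← segment_eq_Icc ht, image_segment, AffineMap.lineMap_apply_zero]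

section

variable {d n : ℕ} {F : EuclideanSpace ℝ (Fin d) → EuclideanSpace ℝ (Fin n)}
  {f : EuclideanSpace ℝ (Fin d) → ℝ}

lemma hasFDerivAt_half_norm_sq (hF : Differentiable ℝ F) (hf : ∀ x, f x = 1 / 2 * ‖F x‖ ^ 2)
    (z : EuclideanSpace ℝ (Fin d)) : HasFDerivAt f (innerSL ℝ (gradf F z)) z := by
  rw [funext hf]
  refine ((hF z).hasFDerivAt.norm_sq.const_mul (1 / 2 : ℝ)).congr_fderiv ?_
  ext v
  simp [gradf, ContinuousLinearMap.adjoint_inner_left]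

lemma norm_le_norm_of_half_norm_sq_le (hf : ∀ x, f x = 1 / 2 * ‖F x‖ ^ 2)
    {a b : EuclideanSpace ℝ (Fin d)} (h : f a ≤ f b) : ‖F a‖ ≤ ‖F b‖ := by
  rw [hf, hf] at h
  nlinarith [norm_nonneg (F a), norm_nonneg (F b)]

lemma norm_gradf_sub_le (hF : Differentiable ℝ F) {a b : EuclideanSpace ℝ (Fin d)} {σ L M : ℝ}
    (hJ : ∀ z ∈ segment ℝ a b, ‖fderiv ℝ F z‖ ≤ σ)
    (hJab : ‖fderiv ℝ F b - fderiv ℝ F a‖ ≤ L * ‖b - a‖) (hFa : ‖F a‖ ≤ M) :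
    ‖gradf F b - gradf F a‖ ≤ (σ ^ 2 + L * M) * ‖b - a‖ := by
  have hFba : ‖F b - F a‖ ≤ σ * ‖b - a‖ :=
    (convex_segment a b).norm_image_sub_le_of_norm_hasFDerivWithin_le
      (fun z _ => (hF z).hasFDerivAt.hasFDerivWithinAt) hJ
      (left_mem_segment ℝ a b) (right_mem_segment ℝ a b)
  have hJb : ‖fderiv ℝ F b‖ ≤ σ := hJ b (right_mem_segment ℝ a b)
  have hsplit : gradf F b - gradf F a = ContinuousLinearMap.adjoint (fderiv ℝ F b) (F b - F a)
      + ContinuousLinearMap.adjoint (fderiv ℝ F b - fderiv ℝ F a) (F a) := by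
    simp only [gradf, map_sub, sub_apply]
    abel
  calc ‖gradf F b - gradf F a‖
      ≤ ‖fderiv ℝ F b‖ * ‖F b - F a‖ + ‖fderiv ℝ F b - fderiv ℝ F a‖ * ‖F a‖ := by
        rw [hsplit]
        refine (norm_add_le _ _).trans (add_le_add ?_ ?_) <;>
          exact (ContinuousLinearMap.le_opNorm _ _).trans_eq
            (by rw [LinearIsometryEquiv.norm_map])
    _ ≤ σ * (σ * ‖b - a‖) + L * ‖b - a‖ * M :=
        add_le_add (mul_le_mul hJb hFba (norm_nonneg _) ((norm_nonneg _).trans hJb))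
          (mul_le_mul hJab hFa (norm_nonneg _) ((norm_nonneg _).trans hJab))
    _ = (σ ^ 2 + L * M) * ‖b - a‖ := by ring

lemma hasDerivAt_comp_lineMap_s7 (hF : Differentiable ℝ F) (hf : ∀ x, f x = 1 / 2 * ‖F x‖ ^ 2)
    (x p : EuclideanSpace ℝ (Fin d)) (t : ℝ) :
    HasDerivAt (fun s => f (AffineMap.lineMap x p s))
      ⟪gradf F (AffineMap.lineMap x p t), p - x⟫ t :=
  (hasFDerivAt_half_norm_sq hF hf _).comp_hasDerivAt t AffineMap.hasDerivAt_lineMap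

lemma apply_lineMap_le_of_norm_gradf_sub_le (hF : Differentiable ℝ F)
    (hf : ∀ x, f x = 1 / 2 * ‖F x‖ ^ 2) {x p : EuclideanSpace ℝ (Fin d)} {t Λ : ℝ} (ht : 0 ≤ t)
    (hLip : ∀ y ∈ segment ℝ x (AffineMap.lineMap x p t),
      ‖gradf F y - gradf F x‖ ≤ Λ * ‖y - x‖) :
    f (AffineMap.lineMap x p t) ≤ f x + t * ⟪gradf F x, p - x⟫ + Λ * ‖p - x‖ ^ 2 * t ^ 2 / 2 := by
  have key := image_le_of_deriv_le_linear (c := Λ * ‖p - x‖ ^ 2)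
    (hasDerivAt_comp_lineMap_s7 hF hf x p) ht fun s hs => ?_
  · simpa using key
  have hy : AffineMap.lineMap x p s ∈ segment ℝ x (AffineMap.lineMap x p t) := by
    rw [segment_lineMap_eq_image ht]
    exact mem_image_of_mem _ (Ico_subset_Icc_self hs)
  have hdist : ‖AffineMap.lineMap x p s - x‖ = s * ‖p - x‖ := by
    rw [← dist_eq_norm, dist_lineMap_left, dist_eq_norm', Real.norm_of_nonneg hs.1]
  calc ⟪gradf F (AffineMap.lineMap x p s), p - x⟫
      = ⟪gradf F x, p - x⟫ + ⟪gradf F (AffineMap.lineMap x p s) - gradf F x, p - x⟫ := by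
        rw [inner_sub_left]; ring
    _ ≤ ⟪gradf F x, p - x⟫ + ‖gradf F (AffineMap.lineMap x p s) - gradf F x‖ * ‖p - x‖ := by
        gcongr; exact real_inner_le_norm _ _
    _ ≤ ⟪gradf F x, p - x⟫ + Λ * ‖AffineMap.lineMap x p s - x‖ * ‖p - x‖ := by
        gcongr; exact hLip _ hy
    _ = ⟪gradf F (AffineMap.lineMap x p (0 : ℝ)), p - x⟫ + Λ * ‖p - x‖ ^ 2 * s := by
        rw [hdist, AffineMap.lineMap_apply_zero]; ring

lemma segment_subset_sublevel_of_descent_step (hF : Differentiable ℝ F)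
    (hf : ∀ x, f x = 1 / 2 * ‖F x‖ ^ 2) {x p : EuclideanSpace ℝ (Fin d)} {c Λ η : ℝ}
    (hη : 0 < η) (hΛη : Λ ≤ η) (hx : f x ≤ c)
    (hstep : ⟪gradf F x, p - x⟫ + η / 2 * ‖p - x‖ ^ 2 ≤ 0)
    (hLip : ∀ y ∈ segment ℝ x p, segment ℝ x y ⊆ {z | f z ≤ c} →
      ‖gradf F y - gradf F x‖ ≤ Λ * ‖y - x‖) :
    segment ℝ x p ⊆ {z | f z ≤ c} := by
  rcases eq_or_ne p x with rfl | hpx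
  · simpa [segment_same] using hx
  have hv : 0 < ‖p - x‖ := norm_pos_iff.2 (sub_ne_zero.2 hpx)
  set g := fun s : ℝ => f (AffineMap.lineMap x p s)
  have hg : ∀ t, HasDerivAt g ⟪gradf F (AffineMap.lineMap x p t), p - x⟫ t :=
    hasDerivAt_comp_lineMap_s7 hF hf x p
  have hg0 : g 0 = f x := by simp [g]
  suffices Icc 0 1 ⊆ {t | g t ≤ c} by
    rw [segment_eq_image_lineMap, image_subset_iff]
    exact this
  refine ((isClosed_le (continuous_iff_continuousAt.2 fun t => (hg t).continuousAt)
    continuous_const).inter isClosed_Icc).Icc_subset_of_forall_mem_nhdsGT_of_Icc_subset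
    (by simpa [g] using hx) fun t ht hgood => ?_
  have hsub : segment ℝ x (AffineMap.lineMap x p t) ⊆ {z | f z ≤ c} := by
    rw [segment_lineMap_eq_image ht.1, image_subset_iff]
    exact hgood
  have hsegp : segment ℝ x (AffineMap.lineMap x p t) ⊆ segment ℝ x p :=
    (convex_segment x p).segment_subset (left_mem_segment ℝ x p)
      (lineMap_mem_segment ℝ x p (Ico_subset_Icc_self ht))
  have hdesc := apply_lineMap_le_of_norm_gradf_sub_le hF hf ht.1 fun y hy => hLip y (hsegp hy)
    (((convex_segment _ _).segment_subset (left_mem_segment ℝ _ _) hy).trans hsub)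
  rcases ht.1.eq_or_lt with rfl | htpos
  · have hD : ⟪gradf F (AffineMap.lineMap x p (0 : ℝ)), p - x⟫ < 0 := by
      rw [AffineMap.lineMap_apply_zero]
      nlinarith [mul_pos hη (pow_pos hv 2)]
    filter_upwards [(hg 0).eventually_nhdsGT_lt hD] with z hz
    exact hz.le.trans (hg0.trans_le hx)
  · have hΛt : Λ * t < η := by
      rcases le_or_gt Λ 0 with hΛ | hΛ <;> nlinarith [ht.2]
    have hgt : g t < c := by
      have : 0 < t * ‖p - x‖ ^ 2 * (η - Λ * t) := by positivity
      nlinarith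
    filter_upwards [nhdsWithin_le_nhds ((hg t).continuousAt.eventually_lt continuousAt_const hgt)]
      with z hz using hz.le

end

theorem stmt_7_general {d n : ℕ}
    (F : EuclideanSpace ℝ (Fin d) → EuclideanSpace ℝ (Fin n))
    (hF : ContDiff ℝ 1 F)
    (f : EuclideanSpace ℝ (Fin d) → ℝ)
    (hf : ∀ x, f x = (1 / 2) * ‖F x‖ ^ 2)
    (C : Set (EuclideanSpace ℝ (Fin d)))
    (hCconvex : Convex ℝ C)
    (x₀ : EuclideanSpace ℝ (Fin d))
    (σ L : ℝ) (hσ : 0 < σ) (hL : 0 < L)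
    (hJ : ∀ x ∈ C ∩ {z | f z ≤ f x₀}, ‖fderiv ℝ F x‖ ≤ σ)
    (hJLip : ∀ x ∈ C, ∀ y ∈ C, segment ℝ x y ⊆ {z | f z ≤ f x₀} →
      ‖fderiv ℝ F y - fderiv ℝ F x‖ ≤ L * ‖y - x‖)
    (Lf : ℝ) (hLfdef : Lf = σ ^ 2 + L * ‖F x₀‖)
    (η : ℝ) (hη : Lf ≤ η)
    (x : EuclideanSpace ℝ (Fin d)) (hx : x ∈ C ∩ {z | f z ≤ f x₀})
    (p : EuclideanSpace ℝ (Fin d)) (hp : p ∈ C)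
    (hpmin : ∀ y ∈ C,
      ⟪gradf F x, p - x⟫ + (η / 2) * ‖p - x‖ ^ 2 ≤
      ⟪gradf F x, y - x⟫ + (η / 2) * ‖y - x‖ ^ 2) :
    ‖gradf F p - gradf F x‖ ≤ Lf * ‖p - x‖ := by
  have hF' : Differentiable ℝ F := hF.differentiable one_ne_zero
  have hLf : 0 < Lf := by rw [hLfdef]; positivity
  have hgradLip : ∀ y ∈ C, segment ℝ x y ⊆ {z | f z ≤ f x₀} →
      ‖gradf F y - gradf F x‖ ≤ Lf * ‖y - x‖ := fun y hy hseg => hLfdef ▸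
    norm_gradf_sub_le hF' (fun z hz => hJ z ⟨hCconvex.segment_subset hx.1 hy hz, hseg hz⟩)
      (hJLip x hx.1 y hy hseg) (norm_le_norm_of_half_norm_sq_le hf hx.2)
  have hstep : ⟪gradf F x, p - x⟫ + η / 2 * ‖p - x‖ ^ 2 ≤ 0 := by
    simpa using hpmin x hx.1
  exact hgradLip p hp <| segment_subset_sublevel_of_descent_step hF' hf (hLf.trans_le hη) hη
    hx.2 hstep fun y hy => hgradLip y (hCconvex.segment_subset hx.1 hp hy)

/-- Lipschitz-like bound on ∇f between a point of C ∩ S(x₀) and its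
projected gradient point.  Here `p` is P_η(x), the minimizer over C of
y ↦ ⟪∇f(x), y − x⟫ + (η/2)‖y − x‖². -/
theorem stmt_7 {d n : ℕ}
    (F : EuclideanSpace ℝ (Fin d) → EuclideanSpace ℝ (Fin n))
    (hF : ContDiff ℝ 1 F)
    (f : EuclideanSpace ℝ (Fin d) → ℝ)
    (hf : ∀ x, f x = (1 / 2) * ‖F x‖ ^ 2)
    (C : Set (EuclideanSpace ℝ (Fin d)))
    (hCne : C.Nonempty) (hCclosed : IsClosed C) (hCconvex : Convex ℝ C)
    (x₀ : EuclideanSpace ℝ (Fin d)) (hx₀ : x₀ ∈ C)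
    (σ L : ℝ) (hσ : 0 < σ) (hL : 0 < L)
    (hJ : ∀ x ∈ C ∩ {z | f z ≤ f x₀}, ‖fderiv ℝ F x‖ ≤ σ)
    (hJLip : ∀ x ∈ C, ∀ y ∈ C, segment ℝ x y ⊆ {z | f z ≤ f x₀} →
      ‖fderiv ℝ F y - fderiv ℝ F x‖ ≤ L * ‖y - x‖)
    (Lf : ℝ) (hLfdef : Lf = σ ^ 2 + L * ‖F x₀‖)
    (η : ℝ) (hη : Lf ≤ η)
    (x : EuclideanSpace ℝ (Fin d)) (hx : x ∈ C ∩ {z | f z ≤ f x₀})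
    (p : EuclideanSpace ℝ (Fin d)) (hp : p ∈ C)
    (hpmin : ∀ y ∈ C,
      ⟪gradf F x, p - x⟫ + (η / 2) * ‖p - x‖ ^ 2 ≤
      ⟪gradf F x, y - x⟫ + (η / 2) * ‖y - x‖ ^ 2) :
    ‖gradf F p - gradf F x‖ ≤ Lf * ‖p - x‖ :=
  stmt_7_general F hF f hf C hCconvex x₀ σ L hσ hL hJ hJLip Lf hLfdef η hη x hx p hp hpmin
end

section
/- Let x_k ∈ C, λ_k > 0, γ > 0, and x_{k+1} ∈ C satisfy f(x_{k+1}) ≤ m^k_{λ_k}(x_{k+1}) and m^k_{λ_k}(x_{k+1}) − m^k_{λ_k}(x_k) ≤ −D_γ(x_k). Then for every η ≥ γ, one has f(x_{k+1}) − f(x_k) ≤ −(1/(2η))‖G_η(x_k)‖². -/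
open scoped RealInnerProductSpace

/-!
The model decrease `m(x_{k+1}) - m(x_k)` is at most `-D_γ(x_k) = φ_γ(P_γ x_k)`, where
`φ_η(y) = ⟪∇f(x_k), y - x_k⟫ + (η/2)‖y - x_k‖²` is `ProxGrad.model (∇f(x_k)) x_k η`.
Since `P_γ x_k` minimizes `φ_γ` and `φ_γ ≤ φ_η` for `γ ≤ η`, this is at most `φ_η(P_η x_k)`,
and the first-order optimality condition of `P_η x_k`, tested against `x_k ∈ C`, gives
`φ_η(P_η x_k) ≤ -(η/2)‖P_η x_k - x_k‖² = -‖G_η(x_k)‖² / (2η)`.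
Finally `f(x_k) = m(x_k)` and `f(x_{k+1}) ≤ m(x_{k+1})`.
-/

namespace ProxGrad

variable {E : Type*} [NormedAddCommGroup E] [InnerProductSpace ℝ E]

noncomputable def model (g x : E) (η : ℝ) (y : E) : ℝ :=
  ⟪g, y - x⟫ + η / 2 * ‖y - x‖ ^ 2

theorem model_mono (g x : E) {γ η : ℝ} (h : γ ≤ η) (y : E) :
    model g x γ y ≤ model g x η y := by
  unfold model
  gcongr

theorem hasFDerivAt_model (g x : E) (η : ℝ) (y : E) :
    HasFDerivAt (model g x η) (innerSL ℝ (g + η • (y - x))) y := by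
  have hsub := (hasFDerivAt_id (𝕜 := ℝ) y).sub_const x
  refine ((innerSL ℝ g).hasFDerivAt.comp y hsub).add
    (hsub.norm_sq.const_mul (η / 2)) |>.congr_fderiv ?_
  ext z
  simp only [ContinuousLinearMap.comp_id, id_eq, map_sub, add_apply,
    coe_innerSL_apply, smul_apply, sub_apply,
    nsmul_eq_mul, Nat.cast_ofNat, smul_eq_mul, map_add, map_smul, add_right_inj]
  ring

theorem inner_add_smul_sub_nonneg_of_isMinOn {s : Set E} (hs : Convex ℝ s) {g x p y : E}
    {η : ℝ}
    (hmin : IsMinOn (model g x η) s p) (hp : p ∈ s) (hy : y ∈ s) :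
    0 ≤ ⟪g + η • (p - x), y - p⟫ :=
  hmin.localize.hasFDerivWithinAt_nonneg
    (hasFDerivAt_model g x η p).hasFDerivWithinAt
    (sub_mem_posTangentConeAt_of_segment_subset (hs.segment_subset hp hy))

theorem model_le_neg_of_isMinOn {s : Set E} (hs : Convex ℝ s) {g x p : E} {η : ℝ}
    (hmin : IsMinOn (model g x η) s p) (hp : p ∈ s) (hx : x ∈ s) :
    model g x η p ≤ -(η / 2 * ‖p - x‖ ^ 2) := by
  have h := inner_add_smul_sub_nonneg_of_isMinOn hs hmin hp hx
  rw [← neg_sub p x, inner_neg_right, inner_add_left, real_inner_smul_left,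
    real_inner_self_eq_norm_sq] at h
  unfold model
  linarith

end ProxGrad

open ProxGrad in
theorem stmt_10_general {d n : ℕ}
    (F : EuclideanSpace ℝ (Fin d) → EuclideanSpace ℝ (Fin n))
    (f : EuclideanSpace ℝ (Fin d) → ℝ)
    (hf : ∀ x, f x = (1 / 2) * ‖F x‖ ^ 2)
    (C : Set (EuclideanSpace ℝ (Fin d)))
    (hCconvex : Convex ℝ C)
    (xk : EuclideanSpace ℝ (Fin d)) (hxk : xk ∈ C)
    (lam γ : ℝ)
    (xk1 : EuclideanSpace ℝ (Fin d))
    (m : EuclideanSpace ℝ (Fin d) → ℝ)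
    (hm : ∀ y, m y = (1 / 2) * ‖F xk + fderiv ℝ F xk (y - xk)‖ ^ 2
      + (lam / 2) * ‖y - xk‖ ^ 2)
    (pγ : EuclideanSpace ℝ (Fin d))
    (hpγmin : ∀ y ∈ C,
      ⟪gradf F xk, pγ - xk⟫ + (γ / 2) * ‖pγ - xk‖ ^ 2 ≤
      ⟪gradf F xk, y - xk⟫ + (γ / 2) * ‖y - xk‖ ^ 2)
    (hmaj : f xk1 ≤ m xk1)
    (hdec : m xk1 - m xk ≤
      -(-(⟪gradf F xk, pγ - xk⟫ + (γ / 2) * ‖pγ - xk‖ ^ 2)))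
    (η : ℝ) (hη : γ ≤ η)
    (pη : EuclideanSpace ℝ (Fin d)) (hpη : pη ∈ C)
    (hpηmin : ∀ y ∈ C,
      ⟪gradf F xk, pη - xk⟫ + (η / 2) * ‖pη - xk‖ ^ 2 ≤
      ⟪gradf F xk, y - xk⟫ + (η / 2) * ‖y - xk‖ ^ 2) :
    f xk1 - f xk ≤ -((1 / (2 * η)) * ‖η • (xk - pη)‖ ^ 2) := by
  have hm_xk : m xk = f xk := by simp [hm, hf]
  have hgap : (1 / (2 * η)) * ‖η • (xk - pη)‖ ^ 2 = η / 2 * ‖pη - xk‖ ^ 2 := by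
    rw [norm_smul, norm_sub_rev, mul_pow, Real.norm_eq_abs, sq_abs]
    rcases eq_or_ne η 0 with rfl | hη0
    · simp
    · field_simp
  calc f xk1 - f xk ≤ m xk1 - m xk := by linarith
    _ ≤ model (gradf F xk) xk γ pγ := neg_neg (model _ _ γ pγ) ▸ hdec
    _ ≤ model (gradf F xk) xk γ pη := hpγmin pη hpη
    _ ≤ model (gradf F xk) xk η pη := model_mono _ _ hη _
    _ ≤ -(η / 2 * ‖pη - xk‖ ^ 2) :=
      model_le_neg_of_isMinOn hCconvex (isMinOn_iff.2 hpηmin) hpη hxk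
    _ = -((1 / (2 * η)) * ‖η • (xk - pη)‖ ^ 2) := by rw [hgap]

/-- One-step decrease of f in terms of the gradient mapping.
Here `pγ = P_γ(x_k)` and `pη = P_η(x_k)` are the projected-gradient minimizers,
so that D_γ(x_k) = −(⟪∇f(x_k), pγ − x_k⟫ + (γ/2)‖pγ − x_k‖²) and
G_η(x_k) = η(x_k − pη). -/
theorem stmt_10 {d n : ℕ}
    (F : EuclideanSpace ℝ (Fin d) → EuclideanSpace ℝ (Fin n))
    (hF : ContDiff ℝ 1 F)
    (f : EuclideanSpace ℝ (Fin d) → ℝ)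
    (hf : ∀ x, f x = (1 / 2) * ‖F x‖ ^ 2)
    (C : Set (EuclideanSpace ℝ (Fin d)))
    (hCne : C.Nonempty) (hCclosed : IsClosed C) (hCconvex : Convex ℝ C)
    (xk : EuclideanSpace ℝ (Fin d)) (hxk : xk ∈ C)
    (lam γ : ℝ) (hlam : 0 < lam) (hγ : 0 < γ)
    (xk1 : EuclideanSpace ℝ (Fin d)) (hxk1 : xk1 ∈ C)
    (m : EuclideanSpace ℝ (Fin d) → ℝ)
    (hm : ∀ y, m y = (1 / 2) * ‖F xk + fderiv ℝ F xk (y - xk)‖ ^ 2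
      + (lam / 2) * ‖y - xk‖ ^ 2)
    (pγ : EuclideanSpace ℝ (Fin d)) (hpγ : pγ ∈ C)
    (hpγmin : ∀ y ∈ C,
      ⟪gradf F xk, pγ - xk⟫ + (γ / 2) * ‖pγ - xk‖ ^ 2 ≤
      ⟪gradf F xk, y - xk⟫ + (γ / 2) * ‖y - xk‖ ^ 2)
    (hmaj : f xk1 ≤ m xk1)
    (hdec : m xk1 - m xk ≤
      -(-(⟪gradf F xk, pγ - xk⟫ + (γ / 2) * ‖pγ - xk‖ ^ 2)))
    (η : ℝ) (hη : γ ≤ η)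
    (pη : EuclideanSpace ℝ (Fin d)) (hpη : pη ∈ C)
    (hpηmin : ∀ y ∈ C,
      ⟪gradf F xk, pη - xk⟫ + (η / 2) * ‖pη - xk‖ ^ 2 ≤
      ⟪gradf F xk, y - xk⟫ + (η / 2) * ‖y - xk‖ ^ 2) :
    f xk1 - f xk ≤ -((1 / (2 * η)) * ‖η • (xk - pη)‖ ^ 2) :=
  stmt_10_general F f hf C hCconvex xk hxk lam γ xk1 m hm pγ hpγmin hmaj hdec η hη pη hpη hpηmin
end

section
/- Let C = ℝ^d (the unconstrained case, so that for every η > 0 and x, G_η(x) = ∇f(x)). Let {x_k} ⊆ ℝ^d and {λ_k} ⊆ (0, ∞) be sequences starting at x₀ and let γ > 0 be such that for every k ≥ 0, f(x_{k+1}) ≤ m^k_{λ_k}(x_{k+1}) (where m^k denotes the model at x_k) and m^k_{λ_k}(x_{k+1}) − m^k_{λ_k}(x_k) ≤ −D_γ(x_k), where in this case D_γ(x) = (1/(2γ))‖∇f(x)‖². Then for every ε > 0, every η ≥ γ, and every positive integer K ≥ 2η f(x₀)/ε², there exists k < K such that ‖∇f(x_k)‖ ≤ ε. -/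
/-!
Since the model is exact at its centre, `m_k(x_k) = f(x_k)`, the two hypotheses on each step
combine into the sufficient decrease `f(x_{k+1}) + ‖∇f(x_k)‖² / (2γ) ≤ f(x_k)`. Telescoping over
`k < K` and using `f ≥ 0` bounds the sum of the `K` decrements by `f(x_0) ≤ K ε² / (2η)`, so
some decrement is at most `ε² / (2η) ≤ ε² / (2γ)`, i.e. some `‖∇f(x_k)‖ ≤ ε`.
-/

open scoped RealInnerProductSpace

open Finset

theorem sum_range_le_sub_of_succ_add_le {G : Type*} [AddCommGroup G] [PartialOrder G]
    [IsOrderedAddMonoid G] {a b : ℕ → G} (h : ∀ k, a (k + 1) + b k ≤ a k) (N : ℕ) :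
    ∑ k ∈ range N, b k ≤ a 0 - a N := by
  rw [← sum_range_sub']
  exact sum_le_sum fun k _ => le_sub_iff_add_le'.mpr (h k)

theorem exists_lt_le_of_sum_range_le {b : ℕ → ℝ} {c : ℝ} {K : ℕ} (hK : 0 < K)
    (h : ∑ k ∈ range K, b k ≤ K * c) : ∃ k < K, b k ≤ c := by
  have h' : ∑ k ∈ range K, b k ≤ ∑ _k ∈ range K, c := by simpa using h
  obtain ⟨k, hk, hbk⟩ := exists_le_of_sum_le (nonempty_range_iff.mpr hK.ne') h'
  exact ⟨k, mem_range.mp hk, hbk⟩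

theorem exists_lt_le_of_sufficient_decrease {a g : ℕ → ℝ} {γ η ε : ℝ} (hγ : 0 < γ)
    (hη : γ ≤ η) (hε : 0 < ε) (ha : ∀ k, 0 ≤ a k)
    (hdec : ∀ k, a (k + 1) + 1 / (2 * γ) * g k ^ 2 ≤ a k)
    {K : ℕ} (hK0 : 0 < K) (hK : 2 * η * a 0 / ε ^ 2 ≤ K) : ∃ k < K, g k ≤ ε := by
  have hη0 : 0 < η := hγ.trans_le hη
  have hsum : ∑ k ∈ range K, 1 / (2 * γ) * g k ^ 2 ≤ K * (1 / (2 * γ) * ε ^ 2) :=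
    calc ∑ k ∈ range K, 1 / (2 * γ) * g k ^ 2
        ≤ a 0 - a K := sum_range_le_sub_of_succ_add_le hdec K
      _ ≤ a 0 := sub_le_self _ (ha K)
      _ ≤ K * (ε ^ 2 / (2 * η)) := by
        rw [div_le_iff₀ (by positivity)] at hK
        rw [← mul_div_assoc, le_div_iff₀ (by positivity)]
        linarith
      _ ≤ K * (1 / (2 * γ) * ε ^ 2) := by rw [one_div_mul_eq_div]; gcongr
  obtain ⟨k, hk, hgk⟩ := exists_lt_le_of_sum_range_le hK0 hsum
  have hsq : g k ^ 2 ≤ ε ^ 2 := le_of_mul_le_mul_left hgk (by positivity)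
  exact ⟨k, hk, (le_abs_self _).trans (abs_le_of_sq_le_sq hsq hε.le)⟩

theorem stmt_12_general {d n : ℕ}
    (F : EuclideanSpace ℝ (Fin d) → EuclideanSpace ℝ (Fin n))
    (f : EuclideanSpace ℝ (Fin d) → ℝ)
    (hf : ∀ z, f z = (1 / 2) * ‖F z‖ ^ 2)
    (x : ℕ → EuclideanSpace ℝ (Fin d))
    (lam : ℕ → ℝ)
    (γ : ℝ) (hγ : 0 < γ)
    (m : ℕ → EuclideanSpace ℝ (Fin d) → ℝ)
    (hm : ∀ k y, m k y =
      (1 / 2) * ‖F (x k) + fderiv ℝ F (x k) (y - x k)‖ ^ 2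
      + (lam k / 2) * ‖y - x k‖ ^ 2)
    (hmaj : ∀ k, f (x (k + 1)) ≤ m k (x (k + 1)))
    (hdec : ∀ k, m k (x (k + 1)) - m k (x k) ≤
      -((1 / (2 * γ)) * ‖gradf F (x k)‖ ^ 2))
    (ε : ℝ) (hε : 0 < ε)
    (η : ℝ) (hη : γ ≤ η)
    (K : ℕ) (hK0 : 0 < K) (hK : 2 * η * f (x 0) / ε ^ 2 ≤ K) :
    ∃ k < K, ‖gradf F (x k)‖ ≤ ε := by
  have hm_center : ∀ k, m k (x k) = f (x k) := by simp [hm, hf]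
  refine exists_lt_le_of_sufficient_decrease (a := fun k => f (x k)) hγ hη hε
    (fun k => by rw [hf]; positivity) (fun k => ?_) hK0 hK
  have hstep := hdec k
  rw [hm_center] at hstep
  linarith [hmaj k]

/-- Global O(ε⁻²) iteration complexity of the LM method in the
unconstrained case C = ℝ^d, where G_η(x) = ∇f(x) and
D_γ(x) = (1/(2γ))‖∇f(x)‖². -/
theorem stmt_12 {d n : ℕ}
    (F : EuclideanSpace ℝ (Fin d) → EuclideanSpace ℝ (Fin n))
    (hF : ContDiff ℝ 1 F)
    (f : EuclideanSpace ℝ (Fin d) → ℝ)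
    (hf : ∀ z, f z = (1 / 2) * ‖F z‖ ^ 2)
    (x : ℕ → EuclideanSpace ℝ (Fin d))
    (lam : ℕ → ℝ) (hlam : ∀ k, 0 < lam k)
    (γ : ℝ) (hγ : 0 < γ)
    (m : ℕ → EuclideanSpace ℝ (Fin d) → ℝ)
    (hm : ∀ k y, m k y =
      (1 / 2) * ‖F (x k) + fderiv ℝ F (x k) (y - x k)‖ ^ 2
      + (lam k / 2) * ‖y - x k‖ ^ 2)
    (hmaj : ∀ k, f (x (k + 1)) ≤ m k (x (k + 1)))
    (hdec : ∀ k, m k (x (k + 1)) - m k (x k) ≤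
      -((1 / (2 * γ)) * ‖gradf F (x k)‖ ^ 2))
    (ε : ℝ) (hε : 0 < ε)
    (η : ℝ) (hη : γ ≤ η)
    (K : ℕ) (hK0 : 0 < K) (hK : 2 * η * f (x 0) / ε ^ 2 ≤ K) :
    ∃ k < K, ‖gradf F (x k)‖ ≤ ε :=
  stmt_12_general F f hf x lam γ hγ m hm hmaj hdec ε hε η hη K hK0 hK
end

section
/- Assume X* := {x ∈ C : F(x) = 0} is nonempty, fix x* ∈ X*, let r > 0, and let B(r) be the closed ball of radius r centered at x*. Assume there are constants c, L, σ > 0 such that c·dist(x) ≤ ‖F(x)‖ for all x ∈ C ∩ B(r) (local error bound), ‖J(y) − J(x)‖ ≤ L‖y − x‖ for all x, y ∈ C ∩ B(r), and ‖F(y) − F(x)‖ ≤ σ‖y − x‖ for all x, y ∈ C ∩ B(r). Let x_k ∈ C ∩ B(r/2), let x̃_k ∈ X* be a closest solution to x_k (i.e., ‖x̃_k − x_k‖ = dist(x_k)), let μ_k > 0, ρ ≥ 0, and let y_k ∈ C satisfy ⟨∇m^k_{μ_k}(y_k), x − y_k⟩ ≥ −ρ μ_k ‖F(x_k)‖ ‖x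 − y_k‖ for all x ∈ C. Then ‖y_k − x_k‖² ≤ (1 + ρ²σ²) dist(x_k)² + (L²/(8μ_k)) dist(x_k)⁴. -/
/-!
Write `v = x̃ₖ - xₖ`, `u = yₖ - xₖ`, `J = J(xₖ)`. Testing the variational inequality with
`x = x̃ₖ` and splitting `F(xₖ) + J u = (F(xₖ) + J v) - J (v - u)` gives
`μ/2 (‖u‖² - ‖v‖²) ≤ ‖F(xₖ) + J v‖² / 4 + μ/2 ρ² ‖F(xₖ)‖²`, after absorbing `‖J (v - u)‖²` and
`μ/2 ‖v - u‖²` by AM-GM. The segment `[xₖ, x̃ₖ]` stays in `C ∩ B(r)`, so the Lipschitz Jacobian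
bounds the linearization residual `‖F(xₖ) + J v‖` by `L/2 ‖v‖²`, and `‖F(xₖ)‖ ≤ σ ‖v‖`.
-/

open scoped RealInnerProductSpace
open Set

section Taylor

variable {E G : Type*} [NormedAddCommGroup E] [NormedSpace ℝ E]
  [NormedAddCommGroup G] [NormedSpace ℝ G]

theorem norm_sub_sub_fderiv_le_of_lipschitz_on_segment {f : E → G} {f' : E → E →L[ℝ] G}
    {x y : E} {L : ℝ} (hf : ∀ z ∈ segment ℝ x y, HasFDerivAt f (f' z) z)
    (hf' : ∀ z ∈ segment ℝ x y, ‖f' z - f' x‖ ≤ L * ‖z - x‖) :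
    ‖f y - f x - f' x (y - x)‖ ≤ L / 2 * ‖y - x‖ ^ 2 := by
  set v := y - x
  set g : ℝ → G := fun t => f (x + t • v) - f x - t • f' x v
  have hseg : ∀ t ∈ Icc (0 : ℝ) 1, x + t • v ∈ segment ℝ x y := fun t ht => by
    rw [segment_eq_image']; exact ⟨t, ht, rfl⟩
  have hg : ∀ t ∈ Icc (0 : ℝ) 1, HasDerivAt g ((f' (x + t • v) - f' x) v) t := by
    intro t ht
    have hline : HasDerivAt (fun t : ℝ => x + t • v) v t := by
      simpa using ((hasDerivAt_id t).smul_const v).const_add x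
    simpa using (((hf _ (hseg t ht)).comp_hasDerivAt t hline).sub_const (f x)).fun_sub
      ((hasDerivAt_id t).smul_const (f' x v))
  have hB : ∀ t : ℝ, HasDerivAt (fun t => L / 2 * t ^ 2 * ‖v‖ ^ 2) (L * t * ‖v‖ ^ 2) t := by
    intro t
    refine (((hasDerivAt_pow 2 t).const_mul (L / 2)).mul_const (‖v‖ ^ 2)).congr_deriv ?_
    push_cast
    ring
  have hbound : ∀ t ∈ Ico (0 : ℝ) 1, ‖(f' (x + t • v) - f' x) v‖ ≤ L * t * ‖v‖ ^ 2 := by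
    intro t ht
    calc ‖(f' (x + t • v) - f' x) v‖ ≤ ‖f' (x + t • v) - f' x‖ * ‖v‖ :=
          ContinuousLinearMap.le_opNorm _ _
      _ ≤ L * ‖t • v‖ * ‖v‖ := by
          gcongr
          simpa using hf' _ (hseg t (Ico_subset_Icc_self ht))
      _ = L * t * ‖v‖ ^ 2 := by rw [norm_smul, Real.norm_of_nonneg ht.1]; ring
  have := image_norm_le_of_norm_deriv_right_le_deriv_boundary
    (fun t ht => (hg t ht).continuousAt.continuousWithinAt)
    (fun t ht => (hg t (Ico_subset_Icc_self ht)).hasDerivWithinAt) (by simp [g]) hB hbound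
    (right_mem_Icc.2 zero_le_one)
  simpa [g, v] using this

end Taylor

section LevenbergMarquardt

variable {E G : Type*} [NormedAddCommGroup E] [InnerProductSpace ℝ E] [CompleteSpace E]
  [NormedAddCommGroup G] [InnerProductSpace ℝ G] [CompleteSpace G]

theorem inner_adjoint_add_smul_sub_eq (J : E →L[ℝ] G) (w : G) (u v : E) (μ : ℝ) :
    ⟪J.adjoint (w + J u) + μ • u, v - u⟫
      = ⟪w + J v, J (v - u)⟫ - ‖J (v - u)‖ ^ 2 + μ * ⟪u, v - u⟫ := by
  have hsplit : w + J u = (w + J v) - J (v - u) := by rw [map_sub]; abel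
  rw [inner_add_left, ContinuousLinearMap.adjoint_inner_left, real_inner_smul_left, hsplit,
    inner_sub_left, real_inner_self_eq_norm_sq]

theorem norm_sq_le_of_lm_variational_ineq (J : E →L[ℝ] G) (w : G) (u v : E) {μ ρ : ℝ}
    (hμ : 0 < μ) (h : -(ρ * μ * ‖w‖) * ‖v - u‖ ≤ ⟪J.adjoint (w + J u) + μ • u, v - u⟫) :
    ‖u‖ ^ 2 ≤ ‖v‖ ^ 2 + ρ ^ 2 * ‖w‖ ^ 2 + ‖w + J v‖ ^ 2 / (2 * μ) := by
  rw [inner_adjoint_add_smul_sub_eq] at h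
  have hres : ⟪w + J v, J (v - u)⟫ - ‖J (v - u)‖ ^ 2 ≤ ‖w + J v‖ ^ 2 / 4 := by
    nlinarith [real_inner_le_norm (w + J v) (J (v - u)), sq_nonneg (‖w + J v‖ - 2 * ‖J (v - u)‖)]
  have hpar : 2 * ⟪u, v - u⟫ = ‖v‖ ^ 2 - ‖u‖ ^ 2 - ‖v - u‖ ^ 2 := by
    rw [norm_sub_sq_real, inner_sub_right, real_inner_self_eq_norm_sq, real_inner_comm]; ring
  have hamgm : 2 * (ρ * ‖w‖) * ‖v - u‖ ≤ (ρ * ‖w‖) ^ 2 + ‖v - u‖ ^ 2 := two_mul_le_add_sq _ _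
  have : μ * ‖u‖ ^ 2 ≤ μ * (‖v‖ ^ 2 + ρ ^ 2 * ‖w‖ ^ 2) + ‖w + J v‖ ^ 2 / 2 := by
    nlinarith
  rw [add_div' _ _ _ (by positivity), le_div_iff₀ (by positivity)]
  nlinarith

end LevenbergMarquardt

theorem stmt_14_general {d n : ℕ}
    (F : EuclideanSpace ℝ (Fin d) → EuclideanSpace ℝ (Fin n))
    (hF : ContDiff ℝ 1 F)
    (C : Set (EuclideanSpace ℝ (Fin d)))
    (hCconvex : Convex ℝ C)
    (Xstar : Set (EuclideanSpace ℝ (Fin d)))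
    (hXstar : Xstar = {x ∈ C | F x = 0})
    (xstar : EuclideanSpace ℝ (Fin d)) (hxstar : xstar ∈ Xstar)
    (r : ℝ)
    (L σ : ℝ)
    (hJLip : ∀ x ∈ C ∩ Metric.closedBall xstar r,
      ∀ y ∈ C ∩ Metric.closedBall xstar r,
      ‖fderiv ℝ F y - fderiv ℝ F x‖ ≤ L * ‖y - x‖)
    (hFLip : ∀ x ∈ C ∩ Metric.closedBall xstar r,
      ∀ y ∈ C ∩ Metric.closedBall xstar r,
      ‖F y - F x‖ ≤ σ * ‖y - x‖)
    (xk : EuclideanSpace ℝ (Fin d))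
    (hxk : xk ∈ C ∩ Metric.closedBall xstar (r / 2))
    (xtk : EuclideanSpace ℝ (Fin d)) (hxtk : xtk ∈ Xstar)
    (hxtkdist : ‖xtk - xk‖ = Metric.infDist xk Xstar)
    (μ : ℝ) (hμ : 0 < μ) (ρ : ℝ)
    (yk : EuclideanSpace ℝ (Fin d))
    (hyk : ∀ x ∈ C,
      ⟪ContinuousLinearMap.adjoint (fderiv ℝ F xk)
          (F xk + fderiv ℝ F xk (yk - xk)) + μ • (yk - xk), x - yk⟫ ≥
        -(ρ * μ * ‖F xk‖) * ‖x - yk‖) :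
    ‖yk - xk‖ ^ 2 ≤ (1 + ρ ^ 2 * σ ^ 2) * Metric.infDist xk Xstar ^ 2
      + (L ^ 2 / (8 * μ)) * Metric.infDist xk Xstar ^ 4 := by
  obtain ⟨hxkC, hxkB⟩ := hxk
  obtain ⟨hxtkC, hFxtk⟩ : xtk ∈ C ∧ F xtk = 0 := by simpa [hXstar] using hxtk
  set b := Metric.infDist xk Xstar
  have hxk_dist : dist xk xstar ≤ r / 2 := Metric.mem_closedBall.1 hxkB
  have hb : b ≤ r / 2 := (Metric.infDist_le_dist_of_mem hxstar).trans hxk_dist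
  have hxk' : xk ∈ C ∩ Metric.closedBall xstar r :=
    ⟨hxkC, Metric.mem_closedBall.2 (by linarith [dist_nonneg (x := xk) (y := xstar)])⟩
  have hxtk' : xtk ∈ C ∩ Metric.closedBall xstar r := by
    refine ⟨hxtkC, Metric.mem_closedBall.2 ?_⟩
    have := dist_triangle xtk xk xstar
    rw [dist_eq_norm xtk xk, hxtkdist] at this
    linarith
  have hseg := (hCconvex.inter (convex_closedBall xstar r)).segment_subset hxk' hxtk'
  have hlin : ‖F xk + fderiv ℝ F xk (xtk - xk)‖ ≤ L / 2 * b ^ 2 := by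
    have := norm_sub_sub_fderiv_le_of_lipschitz_on_segment
      (fun z _ => (hF.differentiable one_ne_zero z).hasFDerivAt)
      (fun z hz => hJLip xk hxk' z (hseg hz))
    rwa [hFxtk, zero_sub, sub_eq_add_neg, ← neg_add, norm_neg, hxtkdist] at this
  have hFxk : ‖F xk‖ ≤ σ * b := by
    simpa [hFxtk, norm_sub_rev xk, hxtkdist] using hFLip xtk hxtk' xk hxk'
  have hstep := norm_sq_le_of_lm_variational_ineq (fderiv ℝ F xk) (F xk) (yk - xk) (xtk - xk) hμ
    (by rw [sub_sub_sub_cancel_right]; exact hyk xtk hxtkC)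
  rw [hxtkdist] at hstep
  calc ‖yk - xk‖ ^ 2
      ≤ b ^ 2 + ρ ^ 2 * ‖F xk‖ ^ 2 + ‖F xk + fderiv ℝ F xk (xtk - xk)‖ ^ 2 / (2 * μ) := hstep
    _ ≤ b ^ 2 + ρ ^ 2 * (σ * b) ^ 2 + (L / 2 * b ^ 2) ^ 2 / (2 * μ) := by gcongr
    _ = (1 + ρ ^ 2 * σ ^ 2) * b ^ 2 + (L ^ 2 / (8 * μ)) * b ^ 4 := by field_simp; ring

/-- Bound on the inexact LM step length in terms of the distance
to the solution set.  Here ∇m^k_{μ_k}(y) = J(x_k)ᵀ(F(x_k) + J(x_k)(y − x_k))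
+ μ_k (y − x_k), written out explicitly in the hypothesis `hyk`. -/
theorem stmt_14 {d n : ℕ}
    (F : EuclideanSpace ℝ (Fin d) → EuclideanSpace ℝ (Fin n))
    (hF : ContDiff ℝ 1 F)
    (C : Set (EuclideanSpace ℝ (Fin d)))
    (hCne : C.Nonempty) (hCclosed : IsClosed C) (hCconvex : Convex ℝ C)
    (Xstar : Set (EuclideanSpace ℝ (Fin d)))
    (hXstar : Xstar = {x ∈ C | F x = 0}) (hXstarNe : Xstar.Nonempty)
    (xstar : EuclideanSpace ℝ (Fin d)) (hxstar : xstar ∈ Xstar)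
    (r : ℝ) (hr : 0 < r)
    (c L σ : ℝ) (hc : 0 < c) (hL : 0 < L) (hσ : 0 < σ)
    (hEB : ∀ x ∈ C ∩ Metric.closedBall xstar r,
      c * Metric.infDist x Xstar ≤ ‖F x‖)
    (hJLip : ∀ x ∈ C ∩ Metric.closedBall xstar r,
      ∀ y ∈ C ∩ Metric.closedBall xstar r,
      ‖fderiv ℝ F y - fderiv ℝ F x‖ ≤ L * ‖y - x‖)
    (hFLip : ∀ x ∈ C ∩ Metric.closedBall xstar r,
      ∀ y ∈ C ∩ Metric.closedBall xstar r,
      ‖F y - F x‖ ≤ σ * ‖y - x‖)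
    (xk : EuclideanSpace ℝ (Fin d))
    (hxk : xk ∈ C ∩ Metric.closedBall xstar (r / 2))
    (xtk : EuclideanSpace ℝ (Fin d)) (hxtk : xtk ∈ Xstar)
    (hxtkdist : ‖xtk - xk‖ = Metric.infDist xk Xstar)
    (μ : ℝ) (hμ : 0 < μ) (ρ : ℝ) (hρ : 0 ≤ ρ)
    (yk : EuclideanSpace ℝ (Fin d)) (hykC : yk ∈ C)
    (hyk : ∀ x ∈ C,
      ⟪ContinuousLinearMap.adjoint (fderiv ℝ F xk)
          (F xk + fderiv ℝ F xk (yk - xk)) + μ • (yk - xk), x - yk⟫ ≥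
        -(ρ * μ * ‖F xk‖) * ‖x - yk‖) :
    ‖yk - xk‖ ^ 2 ≤ (1 + ρ ^ 2 * σ ^ 2) * Metric.infDist xk Xstar ^ 2
      + (L ^ 2 / (8 * μ)) * Metric.infDist xk Xstar ^ 4 :=
  stmt_14_general F hF C hCconvex Xstar hXstar xstar hxstar r L σ hJLip hFLip xk hxk xtk hxtk
    hxtkdist μ hμ ρ yk hyk
end

section
/- Assume X* := {x ∈ C : F(x) = 0} is nonempty, fix x* ∈ X*, let r > 0, and let B(r) be the closed ball of radius r centered at x*. Assume there are constants c, L, σ > 0 such that c·dist(x) ≤ ‖F(x)‖ for all x ∈ C ∩ B(r) (local error bound), ‖J(x)‖ ≤ σ and ‖J(y) − J(x)‖ ≤ L‖y − x‖ for all x, y ∈ C ∩ B(r), and ‖F(y) − F(x)‖ ≤ σ‖y − x‖ for all x, y ∈ C ∩ B(r). Let x_k, x_{k+1} ∈ C ∩ B(r/2), and let constants M̄ > 0, ρ ≥ 0, C₁ > 0 and λ_k > 0 satisfy: λ_k ≤ M̄‖F(x_k)‖; ‖F(x_{k+1})‖ ≤ ‖F(x_k)‖; ‖x_{k+1} − x_k‖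 ≤ C₁ dist(x_k); and ⟨∇m^k_{λ_k}(x_{k+1}), x − x_{k+1}⟩ ≥ −ρ λ_k ‖F(x_k)‖ ‖x − x_{k+1}‖ for all x ∈ C. Then c² dist(x_{k+1}) ≤ (σ²(ρM̄ + L/(2c)) + (LσC₁²)/2 + (L + M̄)σC₁) dist(x_k)². -/
open scoped RealInnerProductSpace
open Set Metric

/-! Let `p` be a solution nearest to `y = x_{k+1}` (it lies in `B(r)` since `y ∈ B(r/2)`),
`u = F y`, `z = y - p` and `J' = J y`. Then `‖u‖² = ⟪J'ᵀ u, z⟫ + ⟪u, u - J' z⟫`. Since `F p = 0`,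
the Lipschitz Taylor bound makes the second term `O(‖z‖²)`. In the first, `J'ᵀ u` differs from
the model gradient `∇m(y)` by `O(dist(x_k)²)`, and `⟪∇m(y), z⟫ ≤ ρ λ ‖F x_k‖ ‖z‖` is the
approximate stationarity at the point `p ∈ C`. Dividing by `‖z‖ = dist(y)` and using
`c dist(y) ≤ ‖u‖ ≤ ‖F x_k‖ ≤ σ dist(x_k)` gives the quadratic bound. -/

theorem Convex.norm_image_sub_sub_fderiv_le {E G : Type*} [NormedAddCommGroup E] [NormedSpace ℝ E]
    [NormedAddCommGroup G] [NormedSpace ℝ G] {f : E → G} {s : Set E} (hs : Convex ℝ s)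
    (hf : ∀ z ∈ s, DifferentiableAt ℝ f z) {L : ℝ} {x y : E} (hx : x ∈ s) (hy : y ∈ s)
    (hL : ∀ z ∈ s, ‖fderiv ℝ f z - fderiv ℝ f x‖ ≤ L * ‖z - x‖) :
    ‖f y - f x - fderiv ℝ f x (y - x)‖ ≤ L / 2 * ‖y - x‖ ^ 2 := by
  set v := y - x
  set g : ℝ → G := fun t => f (x + t • v) - f x - t • fderiv ℝ f x v
  have hseg : ∀ t ∈ Icc (0 : ℝ) 1, x + t • v ∈ s := fun t ht => hs.add_smul_sub_mem hx hy ht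
  have hg : ∀ t ∈ Icc (0 : ℝ) 1,
      HasDerivAt g (fderiv ℝ f (x + t • v) v - fderiv ℝ f x v) t := by
    intro t ht
    have hline : HasDerivAt (fun t : ℝ => x + t • v) v t := by
      simpa using ((hasDerivAt_id t).smul_const v).const_add x
    have hlin : HasDerivAt (fun t : ℝ => t • fderiv ℝ f x v) (fderiv ℝ f x v) t := by
      simpa using (hasDerivAt_id t).smul_const (fderiv ℝ f x v)
    exact (((hf _ (hseg t ht)).hasFDerivAt.comp_hasDerivAt t hline).sub_const (f x)).sub hlin
  have hg' : ∀ t ∈ Ico (0 : ℝ) 1,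
      ‖fderiv ℝ f (x + t • v) v - fderiv ℝ f x v‖ ≤ L * ‖v‖ ^ 2 * t := by
    intro t ht
    calc ‖fderiv ℝ f (x + t • v) v - fderiv ℝ f x v‖
        ≤ ‖fderiv ℝ f (x + t • v) - fderiv ℝ f x‖ * ‖v‖ := by
          rw [← sub_apply]; exact ContinuousLinearMap.le_opNorm _ _
      _ ≤ L * ‖(x + t • v) - x‖ * ‖v‖ := by
          gcongr; exact hL _ (hseg t (Ico_subset_Icc_self ht))
      _ = L * ‖v‖ ^ 2 * t := by
          rw [add_sub_cancel_left, norm_smul, Real.norm_of_nonneg ht.1]; ring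
  have hB : ∀ t : ℝ, HasDerivAt (fun t => L / 2 * ‖v‖ ^ 2 * t ^ 2) (L * ‖v‖ ^ 2 * t) t := by
    intro t
    exact ((hasDerivAt_pow 2 t).const_mul (L / 2 * ‖v‖ ^ 2)).congr_deriv (by norm_num; ring)
  have := image_norm_le_of_norm_deriv_right_le_deriv_boundary
    (fun t ht => (hg t ht).continuousAt.continuousWithinAt)
    (fun t ht => (hg t (Ico_subset_Icc_self ht)).hasDerivWithinAt) (by simp [g]) hB hg'
    (right_mem_Icc.mpr zero_le_one)
  simpa [g, v] using this

theorem IsClosed.exists_mem_closedBall_infDist_eq_dist {α : Type*} [PseudoMetricSpace α]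
    [ProperSpace α] {X : Set α} (hX : IsClosed X) {x₀ x : α} {r : ℝ} (hx₀ : x₀ ∈ X)
    (hx : x ∈ closedBall x₀ (r / 2)) :
    ∃ p ∈ X, p ∈ closedBall x₀ r ∧ infDist x X = dist x p := by
  obtain ⟨p, hpX, hp⟩ := hX.exists_infDist_eq_dist ⟨x₀, hx₀⟩ x
  refine ⟨p, hpX, ?_, hp⟩
  have := infDist_le_dist_of_mem (x := x) hx₀
  rw [mem_closedBall] at hx ⊢
  linarith [dist_triangle p x x₀, dist_comm p x]

section Hilbert

variable {E G : Type*} [NormedAddCommGroup E] [InnerProductSpace ℝ E] [CompleteSpace E]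
  [NormedAddCommGroup G] [InnerProductSpace ℝ G] [CompleteSpace G]

open ContinuousLinearMap

theorem norm_adjoint_apply_le (A : E →L[ℝ] G) (u : G) : ‖adjoint A u‖ ≤ ‖A‖ * ‖u‖ := by
  simpa only [LinearIsometryEquiv.norm_map] using (adjoint A).le_opNorm u

theorem norm_adjoint_sub_adjoint_add_smul_le (A B : E →L[ℝ] G) (u w : G) (s : E) (t : ℝ) :
    ‖adjoint B u - (adjoint A w + t • s)‖ ≤ ‖B - A‖ * ‖u‖ + ‖A‖ * ‖u - w‖ + |t| * ‖s‖ := by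
  have hsplit : adjoint B u - (adjoint A w + t • s) =
      adjoint (B - A) u + adjoint A (u - w) - t • s := by
    simp only [map_sub, sub_apply]; abel
  rw [hsplit]
  refine (norm_sub_le _ _).trans ?_
  rw [norm_smul, Real.norm_eq_abs]
  gcongr
  exact (norm_add_le _ _).trans (add_le_add (norm_adjoint_apply_le _ _) (norm_adjoint_apply_le _ _))

theorem sq_norm_le_inner_add_norm_adjoint_sub_mul (B : E →L[ℝ] G) (u : G) (g z : E) :
    ‖u‖ ^ 2 ≤ ⟪g, z⟫ + ‖adjoint B u - g‖ * ‖z‖ + ‖u‖ * ‖u - B z‖ := by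
  have hsplit : ‖u‖ ^ 2 = ⟪g, z⟫ + ⟪adjoint B u - g, z⟫ + ⟪u, u - B z⟫ := by
    rw [inner_sub_left, adjoint_inner_left, inner_sub_right, real_inner_self_eq_norm_sq]; ring
  rw [hsplit]
  gcongr <;> exact real_inner_le_norm _ _

theorem sq_norm_image_le_of_inner_model_gradient_ge {F : E → G} {S : Set E} (hS : Convex ℝ S)
    (hF : ∀ z ∈ S, DifferentiableAt ℝ F z) {L σ lam ε : ℝ}
    (hJLip : ∀ x ∈ S, ∀ y ∈ S, ‖fderiv ℝ F y - fderiv ℝ F x‖ ≤ L * ‖y - x‖)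
    {x y p : E} (hx : x ∈ S) (hy : y ∈ S) (hp : p ∈ S) (hJx : ‖fderiv ℝ F x‖ ≤ σ)
    (hFp : F p = 0) (hlam : 0 ≤ lam)
    (hgrad : ⟪adjoint (fderiv ℝ F x) (F x + fderiv ℝ F x (y - x)) + lam • (y - x), p - y⟫ ≥
      -ε * ‖p - y‖) :
    ‖F y‖ ^ 2 ≤ (ε + L * ‖y - x‖ * ‖F y‖ + σ * (L / 2 * ‖y - x‖ ^ 2) + lam * ‖y - x‖) * ‖y - p‖
      + ‖F y‖ * (L / 2 * ‖y - p‖ ^ 2) := by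
  set g := adjoint (fderiv ℝ F x) (F x + fderiv ℝ F x (y - x)) + lam • (y - x)
  have hgz : ⟪g, y - p⟫ ≤ ε * ‖y - p‖ := by
    rw [← neg_sub p y, inner_neg_right, norm_neg]
    linarith
  have hres : ‖adjoint (fderiv ℝ F y) (F y) - g‖ ≤
      L * ‖y - x‖ * ‖F y‖ + σ * (L / 2 * ‖y - x‖ ^ 2) + lam * ‖y - x‖ := by
    refine (norm_adjoint_sub_adjoint_add_smul_le _ _ _ _ _ _).trans ?_
    rw [abs_of_nonneg hlam, ← sub_sub]
    have hσ : 0 ≤ σ := (norm_nonneg _).trans hJx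
    gcongr
    · exact hJLip x hx y hy
    · exact hS.norm_image_sub_sub_fderiv_le hF hx hy (hJLip x hx)
  have hlin : ‖F y - fderiv ℝ F y (y - p)‖ ≤ L / 2 * ‖y - p‖ ^ 2 := by
    have := hS.norm_image_sub_sub_fderiv_le hF hy hp (hJLip y hy)
    have hneg : F p - F y - fderiv ℝ F y (p - y) = -(F y - fderiv ℝ F y (y - p)) := by
      rw [hFp, ← neg_sub y p, map_neg]; abel
    rwa [hneg, norm_neg, norm_sub_rev p y] at this
  calc ‖F y‖ ^ 2
      ≤ ⟪g, y - p⟫ + ‖adjoint (fderiv ℝ F y) (F y) - g‖ * ‖y - p‖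
        + ‖F y‖ * ‖F y - fderiv ℝ F y (y - p)‖ := sq_norm_le_inner_add_norm_adjoint_sub_mul _ _ _ _
    _ ≤ ε * ‖y - p‖
        + (L * ‖y - x‖ * ‖F y‖ + σ * (L / 2 * ‖y - x‖ ^ 2) + lam * ‖y - x‖) * ‖y - p‖
        + ‖F y‖ * (L / 2 * ‖y - p‖ ^ 2) := by gcongr
    _ = _ := by ring

end Hilbert

theorem sq_mul_le_of_levenbergMarquardt_bounds {a b s lam D D' c L σ M ρ C₁ : ℝ} (hc : 0 < c)
    (hL : 0 ≤ L) (hσ : 0 ≤ σ) (hM : 0 ≤ M) (hρ : 0 ≤ ρ) (hC₁ : 0 ≤ C₁)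
    (hD : 0 ≤ D) (hD' : 0 ≤ D') (hs₀ : 0 ≤ s) (ha : a ≤ σ * D) (hb : b ≤ a)
    (hcb : c * D' ≤ b) (hs : s ≤ C₁ * D) (hlamM : lam ≤ M * a)
    (hkey : b ^ 2 ≤ (ρ * lam * a + L * s * b + σ * (L / 2 * s ^ 2) + lam * s) * D'
      + b * (L / 2 * D' ^ 2)) :
    c ^ 2 * D' ≤
      (σ ^ 2 * (ρ * M + L / (2 * c)) + L * σ * C₁ ^ 2 / 2 + (L + M) * σ * C₁) * D ^ 2 := by
  rcases hD'.eq_or_lt with rfl | hD'pos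
  · simp only [mul_zero]; positivity
  have hb₀ : 0 ≤ b := (mul_nonneg hc.le hD').trans hcb
  have hlamD : lam ≤ M * (σ * D) := hlamM.trans (by gcongr)
  have ha₀ : 0 ≤ a := hb₀.trans hb
  have hbD : b ≤ σ * D := hb.trans ha
  have hD'D : D' ≤ σ * D / c := by rw [le_div_iff₀ hc]; linarith
  have hcancel : c ^ 2 * D' ≤ ρ * lam * a + L * s * b + σ * (L / 2 * s ^ 2) + lam * s
      + b * (L / 2 * D') := by
    refine le_of_mul_le_mul_right ?_ hD'pos
    nlinarith [mul_le_mul hcb hcb (by positivity) hb₀]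
  calc c ^ 2 * D'
      ≤ ρ * lam * a + L * s * b + σ * (L / 2 * s ^ 2) + lam * s + b * (L / 2 * D') := hcancel
    _ ≤ ρ * (M * (σ * D)) * (σ * D) + L * (C₁ * D) * (σ * D) + σ * (L / 2 * (C₁ * D) ^ 2)
        + M * (σ * D) * (C₁ * D) + σ * D * (L / 2 * (σ * D / c)) := by gcongr
    _ = _ := by ring

theorem stmt_15_general {d n : ℕ}
    (F : EuclideanSpace ℝ (Fin d) → EuclideanSpace ℝ (Fin n))
    (hF : ContDiff ℝ 1 F)
    (C : Set (EuclideanSpace ℝ (Fin d)))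
    (hCclosed : IsClosed C) (hCconvex : Convex ℝ C)
    (Xstar : Set (EuclideanSpace ℝ (Fin d)))
    (hXstar : Xstar = {x ∈ C | F x = 0})
    (xstar : EuclideanSpace ℝ (Fin d)) (hxstar : xstar ∈ Xstar)
    (r : ℝ) (hr : 0 < r)
    (c L σ : ℝ) (hc : 0 < c) (hL : 0 < L) (hσ : 0 < σ)
    (hEB : ∀ x ∈ C ∩ Metric.closedBall xstar r,
      c * Metric.infDist x Xstar ≤ ‖F x‖)
    (hJbd : ∀ x ∈ C ∩ Metric.closedBall xstar r, ‖fderiv ℝ F x‖ ≤ σ)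
    (hJLip : ∀ x ∈ C ∩ Metric.closedBall xstar r,
      ∀ y ∈ C ∩ Metric.closedBall xstar r,
      ‖fderiv ℝ F y - fderiv ℝ F x‖ ≤ L * ‖y - x‖)
    (hFLip : ∀ x ∈ C ∩ Metric.closedBall xstar r,
      ∀ y ∈ C ∩ Metric.closedBall xstar r,
      ‖F y - F x‖ ≤ σ * ‖y - x‖)
    (xk xk1 : EuclideanSpace ℝ (Fin d))
    (hxk : xk ∈ C ∩ Metric.closedBall xstar (r / 2))
    (hxk1 : xk1 ∈ C ∩ Metric.closedBall xstar (r / 2))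
    (Mbar ρ C₁ lam : ℝ)
    (hMbar : 0 < Mbar) (hρ : 0 ≤ ρ) (hC₁ : 0 < C₁) (hlam : 0 < lam)
    (hlamle : lam ≤ Mbar * ‖F xk‖)
    (hFdec : ‖F xk1‖ ≤ ‖F xk‖)
    (hstep : ‖xk1 - xk‖ ≤ C₁ * Metric.infDist xk Xstar)
    (hineq : ∀ x ∈ C,
      ⟪ContinuousLinearMap.adjoint (fderiv ℝ F xk)
          (F xk + fderiv ℝ F xk (xk1 - xk)) + lam • (xk1 - xk), x - xk1⟫ ≥
        -(ρ * lam * ‖F xk‖) * ‖x - xk1‖) :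
    c ^ 2 * Metric.infDist xk1 Xstar ≤
      (σ ^ 2 * (ρ * Mbar + L / (2 * c)) + (L * σ * C₁ ^ 2) / 2
        + (L + Mbar) * σ * C₁) * Metric.infDist xk Xstar ^ 2 := by
  have hdiff : Differentiable ℝ F := hF.differentiable one_ne_zero
  have hXclosed : IsClosed Xstar :=
    hXstar ▸ hCclosed.inter (isClosed_singleton.preimage hdiff.continuous)
  have hsub : C ∩ closedBall xstar (r / 2) ⊆ C ∩ closedBall xstar r :=
    inter_subset_inter_right _ (closedBall_subset_closedBall (by linarith))
  have hnear : ∀ x ∈ C ∩ closedBall xstar (r / 2),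
      ∃ p ∈ C ∩ closedBall xstar r, F p = 0 ∧ infDist x Xstar = ‖x - p‖ := by
    rintro x ⟨-, hx⟩
    obtain ⟨p, hpX, hpr, hp⟩ := hXclosed.exists_mem_closedBall_infDist_eq_dist hxstar hx
    rw [hXstar] at hpX
    exact ⟨p, ⟨hpX.1, hpr⟩, hpX.2, by rw [hp, dist_eq_norm]⟩
  obtain ⟨p, hpS, hFp, hp⟩ := hnear xk hxk
  obtain ⟨p₁, hp₁S, hFp₁, hp₁⟩ := hnear xk1 hxk1
  have hFxk : ‖F xk‖ ≤ σ * infDist xk Xstar := by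
    simpa [hFp, hp] using hFLip p hpS xk (hsub hxk)
  have hkey := sq_norm_image_le_of_inner_model_gradient_ge
    (hCconvex.inter (convex_closedBall _ _)) (fun z _ => hdiff z) hJLip (hsub hxk) (hsub hxk1)
    hp₁S (hJbd xk (hsub hxk)) hFp₁ hlam.le (hineq p₁ hp₁S.1)
  rw [← hp₁] at hkey
  exact sq_mul_le_of_levenbergMarquardt_bounds hc hL.le hσ.le hMbar.le hρ hC₁.le
    infDist_nonneg infDist_nonneg (norm_nonneg _) hFxk hFdec (hEB xk1 (hsub hxk1)) hstep hlamle hkey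

/-- Quadratic decrease of the distance to the solution set for
one inexact LM step.  Here ∇m^k_{λ_k}(y) = J(x_k)ᵀ(F(x_k) + J(x_k)(y − x_k))
+ λ_k (y − x_k), written out explicitly in the hypothesis `hineq`. -/
theorem stmt_15 {d n : ℕ}
    (F : EuclideanSpace ℝ (Fin d) → EuclideanSpace ℝ (Fin n))
    (hF : ContDiff ℝ 1 F)
    (C : Set (EuclideanSpace ℝ (Fin d)))
    (hCne : C.Nonempty) (hCclosed : IsClosed C) (hCconvex : Convex ℝ C)
    (Xstar : Set (EuclideanSpace ℝ (Fin d)))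
    (hXstar : Xstar = {x ∈ C | F x = 0}) (hXstarNe : Xstar.Nonempty)
    (xstar : EuclideanSpace ℝ (Fin d)) (hxstar : xstar ∈ Xstar)
    (r : ℝ) (hr : 0 < r)
    (c L σ : ℝ) (hc : 0 < c) (hL : 0 < L) (hσ : 0 < σ)
    (hEB : ∀ x ∈ C ∩ Metric.closedBall xstar r,
      c * Metric.infDist x Xstar ≤ ‖F x‖)
    (hJbd : ∀ x ∈ C ∩ Metric.closedBall xstar r, ‖fderiv ℝ F x‖ ≤ σ)
    (hJLip : ∀ x ∈ C ∩ Metric.closedBall xstar r,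
      ∀ y ∈ C ∩ Metric.closedBall xstar r,
      ‖fderiv ℝ F y - fderiv ℝ F x‖ ≤ L * ‖y - x‖)
    (hFLip : ∀ x ∈ C ∩ Metric.closedBall xstar r,
      ∀ y ∈ C ∩ Metric.closedBall xstar r,
      ‖F y - F x‖ ≤ σ * ‖y - x‖)
    (xk xk1 : EuclideanSpace ℝ (Fin d))
    (hxk : xk ∈ C ∩ Metric.closedBall xstar (r / 2))
    (hxk1 : xk1 ∈ C ∩ Metric.closedBall xstar (r / 2))
    (Mbar ρ C₁ lam : ℝ)
    (hMbar : 0 < Mbar) (hρ : 0 ≤ ρ) (hC₁ : 0 < C₁) (hlam : 0 < lam)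
    (hlamle : lam ≤ Mbar * ‖F xk‖)
    (hFdec : ‖F xk1‖ ≤ ‖F xk‖)
    (hstep : ‖xk1 - xk‖ ≤ C₁ * Metric.infDist xk Xstar)
    (hineq : ∀ x ∈ C,
      ⟪ContinuousLinearMap.adjoint (fderiv ℝ F xk)
          (F xk + fderiv ℝ F xk (xk1 - xk)) + lam • (xk1 - xk), x - xk1⟫ ≥
        -(ρ * lam * ‖F xk‖) * ‖x - xk1‖) :
    c ^ 2 * Metric.infDist xk1 Xstar ≤
      (σ ^ 2 * (ρ * Mbar + L / (2 * c)) + (L * σ * C₁ ^ 2) / 2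
        + (L + Mbar) * σ * C₁) * Metric.infDist xk Xstar ^ 2 :=
  stmt_15_general F hF C hCclosed hCconvex Xstar hXstar xstar hxstar r hr c L σ hc hL hσ hEB hJbd
    hJLip hFLip xk xk1 hxk hxk1 Mbar ρ C₁ lam hMbar hρ hC₁ hlam hlamle hFdec hstep hineq
end

section
/- Let X* ⊆ ℝ^d be a nonempty closed set and let dist(x) denote the Euclidean distance from x to X*. Let C₁, C₂, δ₀ > 0 be constants with C₂δ₀ < 1, and let {x_k}_{k≥0} ⊆ ℝ^d be a sequence with dist(x₀) ≤ δ₀ such that for all k ≥ 0: ‖x_{k+1} − x_k‖ ≤ C₁ dist(x_k) and dist(x_{k+1}) ≤ C₂ dist(x_k)². Then {x_k} converges to some point x★ ∈ X*, and moreover ‖x_{k+1} − x★‖ ≤ (C₁C₂/(1 − C₂δ₀)) ‖x_k − x★‖² for all k ≥ 0. -/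
/-!
Write `e k` for the distance from `x k` to `X*` and `q = C₂ δ₀ < 1`. Inductively `e k ≤ δ₀`,
so `e (k + 1) ≤ C₂ e k ^ 2 ≤ q e k`: the distances decay geometrically, and so do the steps,
which are at most `C₁ e k`. Hence `x` is Cauchy, and summing the tail gives
`‖x k - x★‖ ≤ C₁ e k / (1 - q)` for its limit `x★`, which lies in `X*` because `e k → 0`.
Then `‖x (k + 1) - x★‖ ≤ C₁ e (k + 1) / (1 - q) ≤ C₁ C₂ e k ^ 2 / (1 - q)`, and
`e k ≤ ‖x k - x★‖` since `x★ ∈ X*`.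
-/

open Filter Topology Metric

section RealSequence

variable {e : ℕ → ℝ} {q : ℝ}

theorem succ_le_mul_of_succ_le_mul_sq {C δ : ℝ} (he : ∀ k, 0 ≤ e k) (hC : 0 ≤ C)
    (hCδ : C * δ ≤ 1) (h0 : e 0 ≤ δ) (hsq : ∀ k, e (k + 1) ≤ C * e k ^ 2) (k : ℕ) :
    e (k + 1) ≤ C * δ * e k := by
  have hle : ∀ k, e k ≤ δ → e (k + 1) ≤ C * δ * e k := fun k hk =>
    calc e (k + 1) ≤ C * e k * e k := by rw [mul_assoc, ← sq]; exact hsq k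
      _ ≤ C * δ * e k := by gcongr; exact he k
  have hbound : ∀ k, e k ≤ δ := by
    intro k
    induction k with
    | zero => exact h0
    | succ k ih => nlinarith [hle k ih, he k]
  exact hle k (hbound k)

theorem le_pow_mul_of_succ_le_mul (hq : 0 ≤ q) (he : ∀ k, e (k + 1) ≤ q * e k) (n m : ℕ) :
    e (n + m) ≤ q ^ m * e n := by
  induction m with
  | zero => simp
  | succ m ih =>
    calc e (n + m + 1) ≤ q * e (n + m) := he _
      _ ≤ q * (q ^ m * e n) := by gcongr
      _ = q ^ (m + 1) * e n := by ring

theorem tendsto_zero_of_succ_le_mul (he₀ : ∀ k, 0 ≤ e k) (hq₀ : 0 ≤ q) (hq₁ : q < 1)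
    (he : ∀ k, e (k + 1) ≤ q * e k) : Tendsto e atTop (𝓝 0) := by
  have hgeom : Tendsto (fun k ↦ q ^ k * e 0) atTop (𝓝 0) := by
    simpa using (tendsto_pow_atTop_nhds_zero_of_lt_one hq₀ hq₁).mul_const (e 0)
  refine squeeze_zero he₀ (fun k ↦ ?_) hgeom
  simpa using le_pow_mul_of_succ_le_mul hq₀ he 0 k

end RealSequence

theorem exists_tendsto_dist_le_of_succ_le_mul {X : Type*} [MetricSpace X] [CompleteSpace X]
    {x : ℕ → X} {e : ℕ → ℝ} {q C : ℝ} (hq₀ : 0 ≤ q) (hq₁ : q < 1) (hC : 0 ≤ C)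
    (hstep : ∀ k, dist (x k) (x (k + 1)) ≤ C * e k) (he : ∀ k, e (k + 1) ≤ q * e k) :
    ∃ a, Tendsto x atTop (𝓝 a) ∧ ∀ n, dist (x n) a ≤ C * e n / (1 - q) := by
  have htail : ∀ n m, dist (x (n + m)) (x (n + m + 1)) ≤ C * e n * q ^ m := fun n m ↦
    calc dist (x (n + m)) (x (n + m + 1)) ≤ C * e (n + m) := hstep _
      _ ≤ C * (q ^ m * e n) := by gcongr; exact le_pow_mul_of_succ_le_mul hq₀ he n m
      _ = C * e n * q ^ m := by ring
  obtain ⟨a, ha⟩ := cauchySeq_tendsto_of_complete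
    (cauchySeq_of_le_geometric q (C * e 0) hq₁ (by simpa using htail 0))
  refine ⟨a, ha, fun n ↦ ?_⟩
  have hshift : Tendsto (fun m ↦ x (n + m)) atTop (𝓝 a) :=
    ha.comp (tendsto_atTop_atTop_of_monotone (fun _ _ h ↦ by omega) fun m ↦ ⟨m, by omega⟩)
  simpa using dist_le_of_le_geometric_of_tendsto₀ q (C * e n) hq₁ (htail n) hshift

theorem mem_of_tendsto_of_tendsto_infDist_zero {X : Type*} [MetricSpace X] {s : Set X}
    (hne : s.Nonempty) (hs : IsClosed s) {x : ℕ → X} {a : X} (hx : Tendsto x atTop (𝓝 a))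
    (hd : Tendsto (fun k ↦ infDist (x k) s) atTop (𝓝 0)) : a ∈ s :=
  (hs.mem_iff_infDist_zero hne).2 <|
    tendsto_nhds_unique (((continuous_infDist_pt s).tendsto a).comp hx) hd

theorem stmt_16_general {d : ℕ}
    (Xstar : Set (EuclideanSpace ℝ (Fin d)))
    (hXstarNe : Xstar.Nonempty) (hXstarClosed : IsClosed Xstar)
    (C₁ C₂ δ₀ : ℝ) (hC₁ : 0 < C₁) (hC₂ : 0 < C₂)
    (hsmall : C₂ * δ₀ < 1)
    (x : ℕ → EuclideanSpace ℝ (Fin d))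
    (hx0 : Metric.infDist (x 0) Xstar ≤ δ₀)
    (hstep : ∀ k, ‖x (k + 1) - x k‖ ≤ C₁ * Metric.infDist (x k) Xstar)
    (hquad : ∀ k, Metric.infDist (x (k + 1)) Xstar ≤
      C₂ * Metric.infDist (x k) Xstar ^ 2) :
    ∃ xs ∈ Xstar, Filter.Tendsto x Filter.atTop (nhds xs) ∧
      ∀ k, ‖x (k + 1) - xs‖ ≤
        (C₁ * C₂ / (1 - C₂ * δ₀)) * ‖x k - xs‖ ^ 2 := by
  set e := fun k ↦ infDist (x k) Xstar
  have he₀ (k : ℕ) : 0 ≤ e k := infDist_nonneg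
  have hq₀ : 0 ≤ C₂ * δ₀ := mul_nonneg hC₂.le ((he₀ 0).trans hx0)
  have hcontr := succ_le_mul_of_succ_le_mul_sq he₀ hC₂.le hsmall.le hx0 hquad
  obtain ⟨xs, hlim, hdist⟩ := exists_tendsto_dist_le_of_succ_le_mul hq₀ hsmall hC₁.le
    (fun k ↦ by rw [dist_comm (x k), dist_eq_norm]; exact hstep k) hcontr
  have hmem : xs ∈ Xstar := mem_of_tendsto_of_tendsto_infDist_zero hXstarNe hXstarClosed hlim
    (tendsto_zero_of_succ_le_mul he₀ hq₀ hsmall hcontr)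
  refine ⟨xs, hmem, hlim, fun k ↦ ?_⟩
  have hek : e k ≤ ‖x k - xs‖ := by rw [← dist_eq_norm]; exact infDist_le_dist_of_mem hmem
  have hpos : 0 < 1 - C₂ * δ₀ := sub_pos.2 hsmall
  calc ‖x (k + 1) - xs‖ = dist (x (k + 1)) xs := (dist_eq_norm _ _).symm
    _ ≤ C₁ * e (k + 1) / (1 - C₂ * δ₀) := hdist (k + 1)
    _ ≤ C₁ * (C₂ * e k ^ 2) / (1 - C₂ * δ₀) := by gcongr; exact hquad k
    _ ≤ C₁ * (C₂ * ‖x k - xs‖ ^ 2) / (1 - C₂ * δ₀) := by gcongr; exact he₀ k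
    _ = C₁ * C₂ / (1 - C₂ * δ₀) * ‖x k - xs‖ ^ 2 := by ring

/-- Quadratic convergence of a sequence whose distance to a
nonempty closed set decreases quadratically and whose steps are controlled by
that distance. -/
theorem stmt_16 {d : ℕ}
    (Xstar : Set (EuclideanSpace ℝ (Fin d)))
    (hXstarNe : Xstar.Nonempty) (hXstarClosed : IsClosed Xstar)
    (C₁ C₂ δ₀ : ℝ) (hC₁ : 0 < C₁) (hC₂ : 0 < C₂) (hδ₀ : 0 < δ₀)
    (hsmall : C₂ * δ₀ < 1)
    (x : ℕ → EuclideanSpace ℝ (Fin d))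
    (hx0 : Metric.infDist (x 0) Xstar ≤ δ₀)
    (hstep : ∀ k, ‖x (k + 1) - x k‖ ≤ C₁ * Metric.infDist (x k) Xstar)
    (hquad : ∀ k, Metric.infDist (x (k + 1)) Xstar ≤
      C₂ * Metric.infDist (x k) Xstar ^ 2) :
    ∃ xs ∈ Xstar, Filter.Tendsto x Filter.atTop (nhds xs) ∧
      ∀ k, ‖x (k + 1) - xs‖ ≤
        (C₁ * C₂ / (1 - C₂ * δ₀)) * ‖x k - xs‖ ^ 2 :=
  stmt_16_general Xstar hXstarNe hXstarClosed C₁ C₂ δ₀ hC₁ hC₂ hsmall x hx0 hstep hquad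
end

section
/- Let x ∈ C and ε > 0. Then the following are equivalent: (i) there exists g ∈ ℝ^d with ⟨g, y − x⟩ ≤ 0 for all y ∈ C (i.e., g lies in the normal cone of C at x) and ‖∇f(x) + g‖ ≤ ε; (ii) ⟨∇f(x), y − x⟩ ≥ −ε‖y − x‖ for all y ∈ C. -/
open scoped RealInnerProductSpace

/-!
Direction (i) ⇒ (ii) is Cauchy–Schwarz. For (ii) ⇒ (i), let `K` be the closed convex cone
generated by `C - x`; (ii) says `⟪v, w⟫ ≥ -ε‖w‖` on `C - x`, hence on `K` by homogeneity and
continuity. Project `-v` onto `K`: by Moreau's decomposition the projection `p` satisfies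
`⟪-v - p, p⟫ = 0` and `-v - p` lies in the polar cone of `K`, i.e. in the normal cone of `C`
at `x`. Then `⟪v, p⟫ = -‖p‖²`, so (ii) applied to `p` gives `‖p‖ ≤ ε`, and `g := -v - p` works
since `v + g = -p`.
-/

open scoped Pointwise

variable {E : Type*} [NormedAddCommGroup E] [InnerProductSpace ℝ E]

theorem neg_mul_norm_le_inner_of_inner_nonpos {ε : ℝ} {v g w : E} (hg : ⟪g, w⟫ ≤ 0)
    (hvg : ‖v + g‖ ≤ ε) : -ε * ‖w‖ ≤ ⟪v, w⟫ :=
  calc -ε * ‖w‖ ≤ -(‖v + g‖ * ‖w‖) := by nlinarith [norm_nonneg w]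
    _ ≤ ⟪v + g, w⟫ := (abs_le.mp (abs_real_inner_le_norm _ _)).1
    _ = ⟪v, w⟫ + ⟪g, w⟫ := inner_add_left _ _ _
    _ ≤ ⟪v, w⟫ := by linarith

namespace ConvexCone

variable [CompleteSpace E]

theorem exists_moreau_decomposition (K : ConvexCone ℝ E) (hK : IsClosed (K : Set E))
    (hne : (K : Set E).Nonempty) (u : E) :
    ∃ p ∈ K, ⟪u - p, p⟫ = 0 ∧ ∀ w ∈ K, ⟪u - p, w⟫ ≤ 0 := by
  obtain ⟨p, hpK, hpmin⟩ := exists_norm_eq_iInf_of_complete_convex hne hK.isComplete K.convex u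
  have hvar : ∀ w ∈ K, ⟪u - p, w - p⟫ ≤ 0 :=
    (norm_eq_iInf_iff_real_inner_le_zero K.convex hpK).mp hpmin
  -- test the variational inequality against the points `2 • p` and `(1/2) • p` of the ray
  have hdouble := hvar ((2 : ℝ) • p) (K.smul_mem two_pos hpK)
  have hhalf := hvar ((1 / 2 : ℝ) • p) (K.smul_mem one_half_pos hpK)
  rw [show (2 : ℝ) • p - p = p by module] at hdouble
  rw [show (1 / 2 : ℝ) • p - p = -((1 / 2 : ℝ) • p) by module, inner_neg_right,
    inner_smul_right] at hhalf
  have horth : ⟪u - p, p⟫ = 0 := by linarith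
  refine ⟨p, hpK, horth, fun w hw => ?_⟩
  have := hvar w hw
  rwa [inner_sub_right, horth, sub_zero] at this

theorem exists_polar_add_norm_le (K : ConvexCone ℝ E) (hne : (K : Set E).Nonempty) {v : E}
    {ε : ℝ} (hε : 0 ≤ ε) (hv : ∀ w ∈ K, -ε * ‖w‖ ≤ ⟪v, w⟫) :
    ∃ g, (∀ w ∈ K, ⟪g, w⟫ ≤ 0) ∧ ‖v + g‖ ≤ ε := by
  have hvK : ∀ w ∈ closure (K : Set E), -ε * ‖w‖ ≤ ⟪v, w⟫ :=
    closure_minimal (t := {w | -ε * ‖w‖ ≤ ⟪v, w⟫}) hv (isClosed_le (by fun_prop) (by fun_prop))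
  obtain ⟨p, hpK, horth, hpolar⟩ :=
    K.closure.exists_moreau_decomposition isClosed_closure hne.closure (-v)
  have hvp : ⟪v, p⟫ = -‖p‖ ^ 2 := by
    rw [inner_sub_left, inner_neg_left, real_inner_self_eq_norm_sq] at horth
    linarith
  have hp : ‖p‖ ≤ ε := by
    have := hvK p hpK
    rw [hvp] at this
    nlinarith [norm_nonneg p]
  refine ⟨-v - p, fun w hw => hpolar w (subset_closure hw), ?_⟩
  rwa [show v + (-v - p) = -p by abel, norm_neg]

end ConvexCone

variable [CompleteSpace E]

theorem exists_normal_add_norm_le_of_inner_ge {C : Set E} (hC : Convex ℝ C) {x : E} (hx : x ∈ C)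
    {ε : ℝ} (hε : 0 ≤ ε) {v : E} (hv : ∀ y ∈ C, ⟪v, y - x⟫ ≥ -ε * ‖y - x‖) :
    ∃ g, (∀ y ∈ C, ⟪g, y - x⟫ ≤ 0) ∧ ‖v + g‖ ≤ ε := by
  set K := ConvexCone.hull ℝ (C - {x})
  have hmem : ∀ y ∈ C, y - x ∈ K := fun y hy =>
    ConvexCone.subset_hull (Set.sub_mem_sub hy (Set.mem_singleton x))
  have hvK : ∀ w ∈ K, -ε * ‖w‖ ≤ ⟪v, w⟫ := by
    intro w hw
    obtain ⟨c, hc, hw⟩ := (ConvexCone.mem_hull_of_convex (hC.sub (convex_singleton x))).1 hw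
    obtain ⟨_, ⟨y, hy, _, rfl, rfl⟩, rfl⟩ := Set.mem_smul_set.1 hw
    rw [inner_smul_right, norm_smul, Real.norm_of_nonneg hc.le]
    nlinarith [hv y hy]
  have hne : (K : Set E).Nonempty := ⟨_, hmem x hx⟩
  obtain ⟨g, hg, hvg⟩ := K.exists_polar_add_norm_le hne hε hvK
  exact ⟨g, fun y hy => hg _ (hmem y hy), hvg⟩

theorem exists_normal_add_norm_le_iff {C : Set E} (hC : Convex ℝ C) {x : E} (hx : x ∈ C)
    {ε : ℝ} (hε : 0 ≤ ε) (v : E) :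
    (∃ g, (∀ y ∈ C, ⟪g, y - x⟫ ≤ 0) ∧ ‖v + g‖ ≤ ε) ↔
      ∀ y ∈ C, ⟪v, y - x⟫ ≥ -ε * ‖y - x‖ :=
  ⟨fun ⟨_, hg, hvg⟩ y hy => neg_mul_norm_le_inner_of_inner_nonpos (hg y hy) hvg,
    exists_normal_add_norm_le_of_inner_ge hC hx hε⟩

theorem stmt_19_general {d n : ℕ}
    (F : EuclideanSpace ℝ (Fin d) → EuclideanSpace ℝ (Fin n))
    (C : Set (EuclideanSpace ℝ (Fin d)))
    (hCconvex : Convex ℝ C)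
    (x : EuclideanSpace ℝ (Fin d)) (hx : x ∈ C)
    (ε : ℝ) (hε : 0 < ε) :
    (∃ g : EuclideanSpace ℝ (Fin d),
      (∀ y ∈ C, ⟪g, y - x⟫ ≤ 0) ∧ ‖gradf F x + g‖ ≤ ε) ↔
    (∀ y ∈ C, ⟪gradf F x, y - x⟫ ≥ -ε * ‖y - x‖) :=
  exists_normal_add_norm_le_iff hCconvex hx hε.le (gradf F x)

/-- Equivalence of the two definitions of an ε-stationary point
of min_{x ∈ C} f(x): existence of a normal-cone element g with ‖∇f(x) + g‖ ≤ ε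
versus the variational inequality ⟪∇f(x), y − x⟫ ≥ −ε‖y − x‖ on C. -/
theorem stmt_19 {d n : ℕ}
    (F : EuclideanSpace ℝ (Fin d) → EuclideanSpace ℝ (Fin n))
    (hF : ContDiff ℝ 1 F)
    (C : Set (EuclideanSpace ℝ (Fin d)))
    (hCne : C.Nonempty) (hCclosed : IsClosed C) (hCconvex : Convex ℝ C)
    (x : EuclideanSpace ℝ (Fin d)) (hx : x ∈ C)
    (ε : ℝ) (hε : 0 < ε) :
    (∃ g : EuclideanSpace ℝ (Fin d),
      (∀ y ∈ C, ⟪g, y - x⟫ ≤ 0) ∧ ‖gradf F x + g‖ ≤ ε) ↔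
    (∀ y ∈ C, ⟪gradf F x, y - x⟫ ≥ -ε * ‖y - x‖) :=
  stmt_19_general F C hCconvex x hx ε hε
end
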